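/- arXiv:1308.4030 — 7 statements merged into one kernel-verified Lean document; each statement's English description precedes it below -/
import Mathlib

section
/- Let b₀, b₁ be elements of a base B of a proper cone Q in a finite-dimensional real vector space and let λ ∈ [0,1]. Then the minimal average error probability Π_λ(b₀,b₁) = min over all f ∈ Q* with 0 ≤_{Q*} f ≤_{Q*} e_B of λ(1 − ⟨f,b₀⟩) + (1−λ)⟨f,b₁⟩ equals (1 − ‖λb₀ − (1−λ)b₁‖_B)/2. -/
/-!
Put `v = λ b₀ - (1 - λ) b₁` and `φ = 2 f - e`. Since `e = 1` on `B`, the error of `f` is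
`(1 - φ v) / 2`, and `f` is a test exactly when `|φ| ≤ 1` on `B`. Every such `φ` has
`φ v ≤ ‖v‖_B`, by evaluating `φ` on a decomposition `v = a b - c b'`. Conversely `‖·‖_B` is
sublinear, so Hahn–Banach gives a linear `φ ≤ ‖·‖_B` with `φ v = ‖v‖_B`; evaluating at `±b`
shows `|φ| ≤ 1` on `B`, and in finite dimension `φ` is continuous.
-/

open Set

variable {V : Type*} [NormedAddCommGroup V] [NormedSpace ℝ V] [FiniteDimensional ℝ V]

def IsConvexCone (Q : Set V) : Prop :=
  ∀ x ∈ Q, ∀ y ∈ Q, ∀ a b : ℝ, 0 ≤ a → 0 ≤ b → a • x + b • y ∈ Q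

def dualConeSet (Q : Set V) : Set (V →L[ℝ] ℝ) := {f | ∀ q ∈ Q, 0 ≤ f q}

def IsBase (Q B : Set V) : Prop :=
  B ⊆ Q ∧ IsCompact B ∧ Convex ℝ B ∧
    ∀ q ∈ Q, q ≠ 0 → ∃! p : ℝ × V, 0 < p.1 ∧ p.2 ∈ B ∧ q = p.1 • p.2

noncomputable def baseNorm (B : Set V) (v : V) : ℝ :=
  sInf {r | ∃ l m : ℝ, ∃ b₁ ∈ B, ∃ b₂ ∈ B, 0 ≤ l ∧ 0 ≤ m ∧ v = l • b₁ - m • b₂ ∧ r = l + m}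

theorem exists_linearMap_eq_and_le_of_sublinear {E : Type*} [AddCommGroup E] [Module ℝ E]
    (N : E → ℝ) (N_hom : ∀ c : ℝ, 0 < c → ∀ x, N (c • x) = c * N x)
    (N_add : ∀ x y, N (x + y) ≤ N x + N y) (x : E) :
    ∃ g : E →ₗ[ℝ] ℝ, g x = N x ∧ ∀ y, g y ≤ N y := by
  have N_zero : N 0 = 0 := by
    have := N_hom 2 two_pos 0
    rw [smul_zero] at this
    linarith
  have smul_le : ∀ c : ℝ, c * N x ≤ N (c • x) := by
    intro c
    rcases lt_trichotomy c 0 with hc | rfl | hc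
    · have := N_add (c • x) ((-c) • x)
      rw [← add_smul, add_neg_cancel, zero_smul, N_zero, N_hom (-c) (neg_pos.2 hc)] at this
      linarith
    · simp [N_zero]
    · exact (N_hom c hc x).ge
  let f : E →ₗ.[ℝ] ℝ := LinearPMap.mkSpanSingleton' (σ := RingHom.id ℝ) x (N x) fun c hc => by
    rcases smul_eq_zero.1 hc with rfl | rfl
    · exact zero_smul _ _
    · rw [N_zero, smul_zero]
  obtain ⟨g, hgf, hgN⟩ := exists_extension_of_le_sublinear f N N_hom N_add <| by
    rintro ⟨z, hz⟩
    obtain ⟨c, rfl⟩ := Submodule.mem_span_singleton.1 hz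
    exact (LinearPMap.mkSpanSingleton'_apply _ _ _ c hz).trans_le (smul_le c)
  have hx : x ∈ f.domain := Submodule.mem_span_singleton_self x
  exact ⟨g, (hgf ⟨x, hx⟩).trans (LinearPMap.mkSpanSingleton'_apply_self _ _ _ hx), hgN⟩

section BaseNorm

open scoped Pointwise

variable {E : Type*} [NormedAddCommGroup E] [NormedSpace ℝ E] {B : Set E}

def baseNormSet (B : Set E) (v : E) : Set ℝ :=
  {r | ∃ l m : ℝ, ∃ b₁ ∈ B, ∃ b₂ ∈ B, 0 ≤ l ∧ 0 ≤ m ∧ v = l • b₁ - m • b₂ ∧ r = l + m}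

theorem baseNorm_eq_sInf (B : Set E) (v : E) : baseNorm B v = sInf (baseNormSet B v) := rfl

theorem bddBelow_baseNormSet (B : Set E) (v : E) : BddBelow (baseNormSet B v) := by
  refine ⟨0, ?_⟩
  rintro _ ⟨l, m, -, -, -, -, hl, hm, -, rfl⟩
  exact add_nonneg hl hm

theorem baseNorm_le {v b₁ b₂ : E} {l m : ℝ} (hb₁ : b₁ ∈ B) (hb₂ : b₂ ∈ B) (hl : 0 ≤ l)
    (hm : 0 ≤ m) (hv : v = l • b₁ - m • b₂) : baseNorm B v ≤ l + m :=
  csInf_le (bddBelow_baseNormSet B v) ⟨l, m, b₁, hb₁, b₂, hb₂, hl, hm, hv, rfl⟩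

theorem mul_mem_baseNormSet {v : E} {r c : ℝ} (hc : 0 ≤ c) (hr : r ∈ baseNormSet B v) :
    c * r ∈ baseNormSet B (c • v) := by
  obtain ⟨l, m, b₁, hb₁, b₂, hb₂, hl, hm, rfl, rfl⟩ := hr
  exact ⟨c * l, c * m, b₁, hb₁, b₂, hb₂, mul_nonneg hc hl, mul_nonneg hc hm,
    by rw [smul_sub, smul_smul, smul_smul], mul_add c l m⟩

theorem baseNormSet_smul {c : ℝ} (hc : 0 < c) (v : E) :
    baseNormSet B (c • v) = c • baseNormSet B v := by
  ext r
  constructor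
  · intro hr
    refine ⟨c⁻¹ * r, ?_, by simp [hc.ne']⟩
    simpa [hc.ne'] using mul_mem_baseNormSet (inv_nonneg.2 hc.le) hr
  · rintro ⟨r, hr, rfl⟩
    exact mul_mem_baseNormSet hc.le hr

theorem baseNorm_smul {c : ℝ} (hc : 0 < c) (v : E) : baseNorm B (c • v) = c * baseNorm B v := by
  rw [baseNorm_eq_sInf, baseNormSet_smul hc, Real.sInf_smul_of_nonneg hc.le, smul_eq_mul,
    baseNorm_eq_sInf]

theorem add_mem_baseNormSet (hB : Convex ℝ B) {v w : E} {r s : ℝ} (hr : r ∈ baseNormSet B v)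
    (hs : s ∈ baseNormSet B w) : r + s ∈ baseNormSet B (v + w) := by
  obtain ⟨l, m, p, hp, q, hq, hl, hm, rfl, rfl⟩ := hr
  obtain ⟨l', m', p', hp', q', hq', hl', hm', rfl, rfl⟩ := hs
  obtain ⟨p'', hp'', hpp⟩ := hB.exists_mem_add_smul_eq hp hp' hl hl'
  obtain ⟨q'', hq'', hqq⟩ := hB.exists_mem_add_smul_eq hq hq' hm hm'
  refine ⟨l + l', m + m', p'', hp'', q'', hq'', add_nonneg hl hl', add_nonneg hm hm', ?_, by ring⟩
  rw [hpp, hqq]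
  abel

theorem baseNorm_add_le (hB : Convex ℝ B) {v w : E} (hv : (baseNormSet B v).Nonempty)
    (hw : (baseNormSet B w).Nonempty) : baseNorm B (v + w) ≤ baseNorm B v + baseNorm B w := by
  rw [baseNorm_eq_sInf, baseNorm_eq_sInf, baseNorm_eq_sInf,
    ← csInf_add hv (bddBelow_baseNormSet B v) hw (bddBelow_baseNormSet B w)]
  refine csInf_le_csInf (bddBelow_baseNormSet B _) (hv.add hw) ?_
  rintro _ ⟨r, hr, s, hs, rfl⟩
  exact add_mem_baseNormSet hB hr hs

theorem apply_le_baseNorm {F : Type*} [FunLike F E ℝ] [LinearMapClass F ℝ E ℝ] {φ : F}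
    (hφ : ∀ b ∈ B, |φ b| ≤ 1) {v : E} (hv : (baseNormSet B v).Nonempty) :
    φ v ≤ baseNorm B v := by
  refine le_csInf hv ?_
  rintro _ ⟨l, m, p, hp, q, hq, hl, hm, rfl, rfl⟩
  have hφp := (abs_le.1 (hφ p hp)).2
  have hφq := (abs_le.1 (hφ q hq)).1
  rw [map_sub, map_smul, map_smul, smul_eq_mul, smul_eq_mul]
  nlinarith

theorem abs_apply_le_one_of_forall_le_baseNorm {F : Type*} [FunLike F E ℝ]
    [LinearMapClass F ℝ E ℝ] {φ : F} (hφ : ∀ v, φ v ≤ baseNorm B v) {b : E} (hb : b ∈ B) :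
    |φ b| ≤ 1 := by
  have hle := (hφ b).trans (baseNorm_le hb hb zero_le_one le_rfl (by simp))
  have hge := (hφ (-b)).trans (baseNorm_le hb hb le_rfl zero_le_one (by simp))
  rw [map_neg] at hge
  exact abs_le.2 ⟨by linarith, by linarith⟩

theorem exists_linearMap_abs_le_one_eq_baseNorm (hB : Convex ℝ B)
    (hspan : ∀ v, (baseNormSet B v).Nonempty) (v : E) :
    ∃ g : E →ₗ[ℝ] ℝ, (∀ b ∈ B, |g b| ≤ 1) ∧ g v = baseNorm B v := by
  obtain ⟨g, hgv, hg⟩ := exists_linearMap_eq_and_le_of_sublinear (baseNorm B)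
    (fun _ hc w => baseNorm_smul hc w) (fun x y => baseNorm_add_le hB (hspan x) (hspan y)) v
  exact ⟨g, fun _ hb => abs_apply_le_one_of_forall_le_baseNorm hg hb, hgv⟩

end BaseNorm

section Cone

variable {E : Type*} [NormedAddCommGroup E] [NormedSpace ℝ E] {Q B : Set E}

def IsTest (Q : Set E) (e f : E →L[ℝ] ℝ) : Prop :=
  f ∈ dualConeSet Q ∧ e - f ∈ dualConeSet Q

namespace IsBase

theorem exists_eq_smul (hQB : IsBase Q B) (hB : B.Nonempty) {q : E} (hq : q ∈ Q) :
    ∃ t : ℝ, 0 ≤ t ∧ ∃ b ∈ B, q = t • b := by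
  rcases eq_or_ne q 0 with rfl | hq0
  · obtain ⟨b, hb⟩ := hB
    exact ⟨0, le_rfl, b, hb, (zero_smul ℝ b).symm⟩
  · obtain ⟨⟨t, b⟩, ⟨ht, hb, rfl⟩, -⟩ := hQB.2.2.2 q hq hq0
    exact ⟨t, ht.le, b, hb, rfl⟩

theorem mem_dualConeSet_iff (hQB : IsBase Q B) (hB : B.Nonempty) {f : E →L[ℝ] ℝ} :
    f ∈ dualConeSet Q ↔ ∀ b ∈ B, 0 ≤ f b := by
  refine ⟨fun hf b hb => hf b (hQB.1 hb), fun hf q hq => ?_⟩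
  obtain ⟨t, ht, b, hb, rfl⟩ := hQB.exists_eq_smul hB hq
  rw [map_smul, smul_eq_mul]
  exact mul_nonneg ht (hf b hb)

theorem baseNormSet_nonempty (hQB : IsBase Q B) (hB : B.Nonempty)
    (hgen : ∀ v : E, ∃ a ∈ Q, ∃ b ∈ Q, v = a - b) (v : E) : (baseNormSet B v).Nonempty := by
  obtain ⟨a, ha, a', ha', rfl⟩ := hgen v
  obtain ⟨t, ht, b, hb, rfl⟩ := hQB.exists_eq_smul hB ha
  obtain ⟨t', ht', b', hb', rfl⟩ := hQB.exists_eq_smul hB ha'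
  exact ⟨t + t', t, t', b, hb, b', hb', ht, ht', rfl, rfl⟩

theorem isTest_iff (hQB : IsBase Q B) (hB : B.Nonempty) {e : E →L[ℝ] ℝ}
    (he : ∀ b ∈ B, e b = 1) {f : E →L[ℝ] ℝ} :
    IsTest Q e f ↔ ∀ b ∈ B, |((2 : ℝ) • f - e) b| ≤ 1 := by
  simp only [IsTest, hQB.mem_dualConeSet_iff hB, ← forall₂_and, sub_apply, smul_apply,
    smul_eq_mul, abs_le]
  refine forall₂_congr fun b hb => ?_
  rw [he b hb]
  constructor <;> rintro ⟨h₁, h₂⟩ <;> constructor <;> linarith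

end IsBase

end Cone

theorem stmt4_general (Q B : Set V) (hgen : ∀ v : V, ∃ a ∈ Q, ∃ b ∈ Q, v = a - b)
    (hBase : IsBase Q B)
    (e : V →L[ℝ] ℝ) (heB : B = {q ∈ Q | e q = 1})
    (b₀ b₁ : V) (hb₀ : b₀ ∈ B) (hb₁ : b₁ ∈ B) (l : ℝ) :
    sInf {r | ∃ f : V →L[ℝ] ℝ, f ∈ dualConeSet Q ∧ (e - f) ∈ dualConeSet Q ∧
        r = l * (1 - f b₀) + (1 - l) * f b₁} =
      (1 - baseNorm B (l • b₀ - (1 - l) • b₁)) / 2 := by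
  have hB : B.Nonempty := ⟨b₀, hb₀⟩
  have he : ∀ b ∈ B, e b = 1 := fun b hb => (heB ▸ hb).2
  have hspan := hBase.baseNormSet_nonempty hB hgen
  set v := l • b₀ - (1 - l) • b₁
  have herr (f : V →L[ℝ] ℝ) :
      l * (1 - f b₀) + (1 - l) * f b₁ = (1 - ((2 : ℝ) • f - e) v) / 2 := by
    simp only [v, map_sub, map_smul, sub_apply, smul_apply, smul_eq_mul, he b₀ hb₀, he b₁ hb₁]
    ring
  obtain ⟨g, hg, hgv⟩ := exists_linearMap_abs_le_one_eq_baseNorm hBase.2.2.1 hspan v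
  set G : V →L[ℝ] ℝ := LinearMap.toContinuousLinearMap g
  set f : V →L[ℝ] ℝ := (2 : ℝ)⁻¹ • (e + G)
  have hfG : (2 : ℝ) • f - e = G := by
    rw [smul_smul, mul_inv_cancel₀ two_ne_zero, one_smul, add_sub_cancel_left]
  obtain ⟨hf, hef⟩ : IsTest Q e f := (hBase.isTest_iff hB he).2 (hfG ▸ hg)
  refine IsLeast.csInf_eq ⟨⟨f, hf, hef, ?_⟩, ?_⟩
  · rw [herr, hfG]
    exact congrArg (fun r => (1 - r) / 2) hgv.symm
  · rintro _ ⟨f, hf, hef, rfl⟩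
    rw [herr]
    have := apply_le_baseNorm ((hBase.isTest_iff hB he).1 ⟨hf, hef⟩) (hspan v)
    linarith

/-- The minimal average error probability of discriminating `b₀` and `b₁` by tests
(elements `f ∈ Q*` with `f ≤_{Q*} e_B`) equals `(1 - ‖λ b₀ - (1-λ) b₁‖_B)/2`. -/
theorem stmt4 (Q B : Set V) (hconv : IsConvexCone Q) (hclosed : IsClosed Q)
    (hpointed : Q ∩ (-Q) ⊆ {0}) (hgen : ∀ v : V, ∃ a ∈ Q, ∃ b ∈ Q, v = a - b)
    (hBase : IsBase Q B)
    (e : V →L[ℝ] ℝ) (he : ∀ q ∈ Q, 0 ≤ e q) (heB : B = {q ∈ Q | e q = 1})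
    (b₀ b₁ : V) (hb₀ : b₀ ∈ B) (hb₁ : b₁ ∈ B) (l : ℝ) (hl0 : 0 ≤ l) (hl1 : l ≤ 1) :
    sInf {r | ∃ f : V →L[ℝ] ℝ, f ∈ dualConeSet Q ∧ (e - f) ∈ dualConeSet Q ∧
        r = l * (1 - f b₀) + (1 - l) * f b₁} =
      (1 - baseNorm B (l • b₀ - (1 - l) • b₁)) / 2 :=
  stmt4_general Q B hgen hBase e heB b₀ b₁ hb₀ hb₁ l
end

section
/- Let B = J ∩ S_b̃ be a faithful section of a base of B(H)^+ (J = span B contains a positive definite element, b̃ positive definite) and define the dual section B̃ = {c ∈ B(H)^+ : Tr(bc) = 1 for all b ∈ B}. Then B̃ = J̃ ∩ S_b for any b in the relative interior of B, where J̃ = span(B̃); in particular B̃ is itself a faithful section of a base of B(H)^+. -/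
open Matrix ComplexOrder

variable {n : ℕ}

def Sb (b : Matrix (Fin n) (Fin n) ℂ) : Set (Matrix (Fin n) (Fin n) ℂ) :=
  {a | a.PosSemidef ∧ (a * b).trace = 1}

/-- The dual section `B̃ = {c ≥ 0 : Tr(bc) = 1 for all b ∈ B}`. -/
def dualSection (B : Set (Matrix (Fin n) (Fin n) ℂ)) : Set (Matrix (Fin n) (Fin n) ℂ) :=
  {c | c.PosSemidef ∧ ∀ b ∈ B, (b * c).trace = 1}

/-- If `B = J ∩ S_b̃` is a faithful section, then `B̃ = span(B̃) ∩ S_b` for any `b` in the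
relative interior of `B`; in particular `B̃` is a faithful section. -/
theorem stmt8 (L : Submodule ℝ (Matrix (Fin n) (Fin n) ℂ)) (bt : Matrix (Fin n) (Fin n) ℂ)
    (hbt : bt.PosDef) (B : Set (Matrix (Fin n) (Fin n) ℂ))
    (hB : B = (L : Set (Matrix (Fin n) (Fin n) ℂ)) ∩ Sb bt)
    (hfaith : ∃ b ∈ B, b.PosDef) :
    (∀ b ∈ intrinsicInterior ℝ B,
      dualSection B =
        ((Submodule.span ℝ (dualSection B) : Submodule ℝ (Matrix (Fin n) (Fin n) ℂ)) :
          Set (Matrix (Fin n) (Fin n) ℂ)) ∩ Sb b) ∧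
    ∃ c ∈ dualSection B, c.PosDef := by
  constructor
  · intro b hb
    have hbB : b ∈ B := intrinsicInterior_subset hb
    ext c
    constructor
    · rintro ⟨hc, hc2⟩
      exact ⟨Submodule.subset_span ⟨hc, hc2⟩, hc,
        by rw [Matrix.trace_mul_comm]; exact hc2 b hbB⟩
    · rintro ⟨hcspan, hcpsd, hctr⟩
      refine ⟨hcpsd, fun b' hb' => ?_⟩
      let g : Matrix (Fin n) (Fin n) ℂ →ₗ[ℝ] ℂ :=
        { toFun := fun x => (b' * x).trace - (x * b).trace
          map_add' := by
            intro x y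
            simp [Matrix.mul_add, Matrix.add_mul]
            ring
          map_smul' := by
            intro t x
            simp [Matrix.mul_smul, Matrix.smul_mul, smul_sub] }
      have hker : dualSection B ⊆ (LinearMap.ker g : Set _) := by
        intro x hx
        simp only [SetLike.mem_coe, LinearMap.mem_ker]
        have h1 := hx.2 b' hb'
        have h2 := hx.2 b hbB
        simp [g, h1, Matrix.trace_mul_comm x b, h2]
      have hgc : g c = 0 := Submodule.span_le.mpr hker hcspan
      have heq : (b' * c).trace = (c * b).trace := sub_eq_zero.mp hgc
      rw [heq, hctr]
  · exact ⟨bt, ⟨hbt.posSemidef, fun b hb => by rw [hB] at hb; exact hb.2.2⟩, hbt⟩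
end

section
/- Let B be a faithful section of a base of B(H)^+ and B̃ its dual section. Then the double dual section satisfies B̃̃ = B. -/
/-!
The inclusion `B ⊆ B̃̃` is immediate. Conversely, let `d ∈ B̃̃` and write `B = J ∩ S_b̃`. Since
`b̃ ∈ B̃` we get `Tr(d b̃) = 1`, so it remains to show `d ∈ span_ℝ B ⊆ J`. If `k` is hermitian with
`Tr(a k) = 0` for all `a ∈ B`, then `b̃ ± εk` is still positive for small `ε > 0` because `b̃` is
positive definite, so `b̃ ± εk ∈ B̃`, and comparing `Tr(d (b̃ ± εk)) = 1` gives `Tr(d k) = 0`.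
As the real pairing `Re Tr(x y)` on matrices is nondegenerate, this puts `d` in the double
orthogonal of `span_ℝ B`, which is `span_ℝ B` itself.
-/

open Matrix ComplexOrder

variable {n : ℕ}

/-- `B` is a section of a base of the positive cone. -/
def IsSection (B : Set (Matrix (Fin n) (Fin n) ℂ)) : Prop :=
  ∃ (L : Submodule ℝ (Matrix (Fin n) (Fin n) ℂ)) (b : Matrix (Fin n) (Fin n) ℂ),
    b.PosDef ∧ B = (L : Set (Matrix (Fin n) (Fin n) ℂ)) ∩ Sb b

/-- `B` is a faithful section: a section containing a positive definite element. -/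
def IsFaithfulSection (B : Set (Matrix (Fin n) (Fin n) ℂ)) : Prop :=
  IsSection B ∧ ∃ b ∈ B, b.PosDef

lemma IsStrictlyPositive.exists_pos_nonneg_add_sub_smul {A : Type*} [CStarAlgebra A]
    [PartialOrder A] [StarOrderedRing A] {b k : A} (hb : IsStrictlyPositive b)
    (hk : IsSelfAdjoint k) :
    ∃ ε : ℝ, 0 < ε ∧ 0 ≤ b + ε • k ∧ 0 ≤ b - ε • k := by
  cases subsingleton_or_nontrivial A
  · exact ⟨1, one_pos, by simp [Subsingleton.elim _ (0 : A)]⟩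
  obtain ⟨r, hr, hrb⟩ : ∃ r > 0, algebraMap ℝ A r ≤ b :=
    (CFC.exists_pos_algebraMap_le_iff hb.isSelfAdjoint).2 fun _ hx ↦ hb.spectrum_pos hx
  set ε := r / (‖k‖ + 1)
  have hε : 0 < ε := by positivity
  have hεk : ‖ε • k‖ ≤ r := by
    rw [norm_smul, Real.norm_of_nonneg hε.le, div_mul_eq_mul_div, div_le_iff₀ (by positivity)]
    nlinarith [norm_nonneg k]
  have hle : algebraMap ℝ A ‖ε • k‖ ≤ b := (algebraMap_mono A hεk).trans hrb
  refine ⟨ε, hε, ?_, ?_⟩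
  · calc 0 ≤ algebraMap ℝ A ‖ε • k‖ + ε • k :=
          neg_le_iff_add_nonneg'.mp ((IsSelfAdjoint.all ε).smul hk).neg_algebraMap_norm_le_self
      _ ≤ b + ε • k := add_le_add_left hle _
  · exact sub_nonneg.mpr (((IsSelfAdjoint.all ε).smul hk).le_algebraMap_norm_self.trans hle)

open scoped Matrix.Norms.L2Operator MatrixOrder in
lemma Matrix.PosDef.exists_pos_posSemidef_add_sub_smul {m : Type*} [Fintype m] [DecidableEq m]
    {b k : Matrix m m ℂ} (hb : b.PosDef) (hk : k.IsHermitian) :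
    ∃ ε : ℝ, 0 < ε ∧ (b + ε • k).PosSemidef ∧ (b - ε • k).PosSemidef := by
  obtain ⟨ε, hε, hplus, hminus⟩ :=
    hb.isStrictlyPositive.exists_pos_nonneg_add_sub_smul hk.isSelfAdjoint
  exact ⟨ε, hε, hplus.posSemidef, hminus.posSemidef⟩

namespace Matrix

noncomputable def reTraceForm (m : Type*) [Fintype m] : LinearMap.BilinForm ℝ (Matrix m m ℂ) :=
  (LinearMap.mul ℝ (Matrix m m ℂ)).compr₂ (Complex.reLm ∘ₗ traceLinearMap m ℝ ℂ)

variable {m : Type*} [Fintype m]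

@[simp]
lemma reTraceForm_apply (x y : Matrix m m ℂ) : reTraceForm m x y = (x * y).trace.re := rfl

lemma reTraceForm_isSymm : (reTraceForm m).IsSymm :=
  LinearMap.BilinForm.isSymm_def.mpr fun x y ↦ by simp only [reTraceForm_apply, trace_mul_comm x]

lemma reTraceForm_nondegenerate : (reTraceForm m).Nondegenerate := by
  refine reTraceForm_isSymm.isRefl.nondegenerate_iff_separatingLeft.mpr fun x hx ↦ ?_
  have hre : (x * xᴴ).trace.re = 0 := hx xᴴ
  have him : 0 = (x * xᴴ).trace.im :=
    (Complex.nonneg_iff.mp (posSemidef_self_mul_conjTranspose x).trace_nonneg).2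
  have htr : (xᴴᴴ * xᴴ).trace = 0 := by
    rw [conjTranspose_conjTranspose]
    exact Complex.ext hre him.symm
  simpa using trace_conjTranspose_mul_self_eq_zero_iff.mp htr

lemma IsHermitian.reTraceForm_conjTranspose_right {x : Matrix m m ℂ} (hx : x.IsHermitian)
    (y : Matrix m m ℂ) : reTraceForm m x yᴴ = reTraceForm m x y := by
  rw [reTraceForm_apply, reTraceForm_apply, ← hx.eq, ← conjTranspose_mul, trace_conjTranspose,
    trace_mul_comm, hx.eq]
  exact Complex.conj_re _

lemma IsHermitian.trace_mul_eq_re {x y : Matrix m m ℂ} (hx : x.IsHermitian) (hy : y.IsHermitian) :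
    (x * y).trace = (x * y).trace.re := by
  refine (Complex.conj_eq_iff_re.mp ?_).symm
  rw [← Complex.star_def, ← trace_conjTranspose, conjTranspose_mul, hx.eq, hy.eq, trace_mul_comm]

lemma mem_span_of_forall_trace_mul_eq_zero {S : Set (Matrix m m ℂ)} (hS : ∀ a ∈ S, a.IsHermitian)
    {d : Matrix m m ℂ} (hd : d.IsHermitian)
    (h : ∀ k : Matrix m m ℂ, k.IsHermitian → (∀ a ∈ S, (a * k).trace = 0) → (d * k).trace = 0) :
    d ∈ Submodule.span ℝ S := by
  rw [← (reTraceForm m).orthogonal_orthogonal reTraceForm_nondegenerate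
    reTraceForm_isSymm.isRefl (Submodule.span ℝ S), LinearMap.BilinForm.mem_orthogonal_iff]
  intro k hk
  -- `k` need not be hermitian; test `d` against the hermitian matrix `k + kᴴ` instead
  have hform : ∀ x : Matrix m m ℂ, x.IsHermitian →
      reTraceForm m x (k + kᴴ) = 2 * reTraceForm m x k :=
    fun x hx ↦ by rw [map_add, hx.reTraceForm_conjTranspose_right]; ring
  have hSk : ∀ a ∈ S, (a * (k + kᴴ)).trace = 0 := fun a ha ↦ by
    rw [(hS a ha).trace_mul_eq_re (isHermitian_add_transpose_self k), ← reTraceForm_apply,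
      hform a (hS a ha), LinearMap.BilinForm.mem_orthogonal_iff.mp hk a (Submodule.subset_span ha)]
    simp
  have hdk := hform d hd
  rw [reTraceForm_apply, h _ (isHermitian_add_transpose_self k) hSk, Complex.zero_re] at hdk
  rw [reTraceForm_isSymm.eq]
  linarith

end Matrix

lemma subset_dualSection_dualSection {B : Set (Matrix (Fin n) (Fin n) ℂ)}
    (hB : ∀ a ∈ B, a.PosSemidef) : B ⊆ dualSection (dualSection B) :=
  fun a ha ↦ ⟨hB a ha, fun c hc ↦ by rw [trace_mul_comm]; exact hc.2 a ha⟩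

lemma add_mem_dualSection {B : Set (Matrix (Fin n) (Fin n) ℂ)} {c k : Matrix (Fin n) (Fin n) ℂ}
    (hc : c ∈ dualSection B) (hk : ∀ a ∈ B, (a * k).trace = 0) (hck : (c + k).PosSemidef) :
    c + k ∈ dualSection B :=
  ⟨hck, fun a ha ↦ by rw [Matrix.mul_add, trace_add, hc.2 a ha, hk a ha, add_zero]⟩

lemma trace_mul_eq_zero_of_mem_dualSection_dualSection {B : Set (Matrix (Fin n) (Fin n) ℂ)}
    {c d k : Matrix (Fin n) (Fin n) ℂ} (hd : d ∈ dualSection (dualSection B))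
    (hc : c ∈ dualSection B) (hk : ∀ a ∈ B, (a * k).trace = 0)
    (hplus : (c + k).PosSemidef) (hminus : (c - k).PosSemidef) : (d * k).trace = 0 := by
  have hk' : ∀ a ∈ B, (a * -k).trace = 0 := fun a ha ↦ by
    rw [Matrix.mul_neg, trace_neg, hk a ha, neg_zero]
  have hadd := hd.2 _ (add_mem_dualSection hc hk hplus)
  have hsub := hd.2 _ (add_mem_dualSection hc hk' (sub_eq_add_neg c k ▸ hminus))
  rw [Matrix.add_mul, trace_add] at hadd
  rw [Matrix.add_mul, trace_add, Matrix.neg_mul, trace_neg] at hsub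
  rw [trace_mul_comm]
  linear_combination (hadd - hsub) / 2

theorem IsSection.dualSection_dualSection_eq {B : Set (Matrix (Fin n) (Fin n) ℂ)}
    (hB : IsSection B) : dualSection (dualSection B) = B := by
  obtain ⟨L, b, hb, rfl⟩ := hB
  have hpsd : ∀ a ∈ (L : Set _) ∩ Sb b, a.PosSemidef := fun a ha ↦ ha.2.1
  refine Set.Subset.antisymm ?_ (subset_dualSection_dualSection hpsd)
  intro d hd
  have hb_mem : b ∈ dualSection ((L : Set _) ∩ Sb b) := ⟨hb.posSemidef, fun a ha ↦ ha.2.2⟩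
  have hd_span : d ∈ Submodule.span ℝ ((L : Set _) ∩ Sb b) := by
    refine Matrix.mem_span_of_forall_trace_mul_eq_zero (fun a ha ↦ (hpsd a ha).isHermitian)
      hd.1.isHermitian fun k hk hBk ↦ ?_
    obtain ⟨ε, hε, hplus, hminus⟩ := hb.exists_pos_posSemidef_add_sub_smul hk
    have hBεk : ∀ a ∈ (L : Set _) ∩ Sb b, (a * ε • k).trace = 0 := fun a ha ↦ by
      rw [Matrix.mul_smul, trace_smul, hBk a ha, smul_zero]
    have := trace_mul_eq_zero_of_mem_dualSection_dualSection hd hb_mem hBεk hplus hminus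
    rwa [Matrix.mul_smul, trace_smul, smul_eq_zero, or_iff_right hε.ne'] at this
  exact ⟨Submodule.span_le.mpr Set.inter_subset_left hd_span, hd.1,
    by rw [trace_mul_comm]; exact hd.2 b hb_mem⟩

/-- For a faithful section `B`, the double dual section equals `B`. -/
theorem stmt9 (B : Set (Matrix (Fin n) (Fin n) ℂ)) (hB : IsFaithfulSection B) :
    dualSection (dualSection B) = B :=
  hB.1.dualSection_dualSection_eq
end

section
/- Let B be a faithful section of a base of B(H)^+ and define O_B = {x ∈ B_h(H) : x = x₁ − x₂, x₁,x₂ ≥ 0, x₁ + x₂ ∈ B}. Then O_B = {x ∈ B_h(H) : ∃ b ∈ B with −b ≤ x ≤ b}, and the intersection O_B ∩ span(B) is exactly the unit ball of the base norm ‖·‖_B on span(B). -/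
open Matrix ComplexOrder

variable {n : ℕ}

/-- `O_B = {x = x₁ - x₂ : x₁, x₂ ≥ 0, x₁ + x₂ ∈ B}`. -/
def OB (B : Set (Matrix (Fin n) (Fin n) ℂ)) : Set (Matrix (Fin n) (Fin n) ℂ) :=
  {x | ∃ x₁ x₂ : Matrix (Fin n) (Fin n) ℂ,
    x₁.PosSemidef ∧ x₂.PosSemidef ∧ x₁ + x₂ ∈ B ∧ x = x₁ - x₂}

/-- The base norm on `span(B)`. -/
noncomputable def baseNormM (B : Set (Matrix (Fin n) (Fin n) ℂ))
    (x : Matrix (Fin n) (Fin n) ℂ) : ℝ :=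
  sInf {r | ∃ s t : ℝ, ∃ b₁ ∈ B, ∃ b₂ ∈ B, 0 ≤ s ∧ 0 ≤ t ∧ x = s • b₁ - t • b₂ ∧ r = s + t}

/-! The first identity is the substitution `x₁ = (b + x) / 2`, `x₂ = (b - x) / 2`.
For the second, positive definiteness of `b̃` makes `a ↦ tr (a b̃)` strictly positive on nonzero
positive matrices, so every positive `a ∈ span B` is `tr (a b̃) • b` for some `b ∈ B`. Hence
`x = x₁ - x₂` with `x₁ + x₂ ∈ B` is a decomposition `x = s b₁ - t b₂` with `s + t = 1`; conversely
such a decomposition with `s + t ≤ 1` gives `c = s b₁ + t b₂` with `-c ≤ x ≤ c`, and adding a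
multiple of a fixed element of `B` moves `c` into `B`. As the base norm is an infimum, this only
yields `r x ∈ O_B` for `r < 1`; but `b̃ ≥ ε` bounds the trace on `B`, so `B` is compact and
`O_B` is closed. -/

lemma Complex.ofReal_re_of_nonneg {z : ℂ} (hz : 0 ≤ z) : (z.re : ℂ) = z :=
  (Complex.eq_re_of_ofReal_le (by rwa [Complex.ofReal_zero])).symm

namespace Matrix

variable {m : Type*} [Fintype m] {A H g : Matrix m m ℂ}

lemma isClosed_setOf_posSemidef : IsClosed {A : Matrix m m ℂ | A.PosSemidef} := by
  simp only [posSemidef_iff_dotProduct_mulVec, Set.ofPred_and, Set.ofPred_forall]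
  exact (isClosed_eq (by fun_prop) continuous_id).inter
    (isClosed_iInter fun x => isClosed_le continuous_const (by fun_prop))

lemma PosSemidef.re_apply_self_le_re_trace (hA : A.PosSemidef) (i : m) :
    (A i i).re ≤ A.trace.re := by
  rw [trace, Complex.re_sum]
  exact Finset.single_le_sum (f := fun k => (A k k).re)
    (fun k _ => (Complex.nonneg_iff.mp hA.diag_nonneg).1) (Finset.mem_univ i)

/-- From the nonnegative `2 × 2` principal minor: `‖A i j‖² ≤ A i i * A j j`. -/
lemma PosSemidef.norm_apply_le_re_trace (hA : A.PosSemidef) (i j : m) :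
    ‖A i j‖ ≤ A.trace.re := by
  have hminor := (hA.submatrix ![i, j]).det_nonneg
  simp only [det_fin_two, submatrix_apply, cons_val_zero, cons_val_one] at hminor
  rw [← hA.isHermitian.apply i j, Complex.star_def, Complex.conj_mul',
    ← Complex.ofReal_re_of_nonneg (hA.diag_nonneg (i := i)),
    ← Complex.ofReal_re_of_nonneg (hA.diag_nonneg (i := j))] at hminor
  norm_cast at hminor
  rw [← norm_star, hA.isHermitian.apply i j] at hminor
  have hii := (Complex.nonneg_iff.mp (hA.diag_nonneg (i := i))).1
  have hjj := (Complex.nonneg_iff.mp (hA.diag_nonneg (i := j))).1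
  nlinarith [norm_nonneg (A i j), hA.re_apply_self_le_re_trace i,
    hA.re_apply_self_le_re_trace j]

open scoped MatrixOrder in
lemma PosSemidef.trace_mul_nonneg (hA : A.PosSemidef) (hH : H.PosSemidef) :
    0 ≤ (A * H).trace := by
  classical
  obtain ⟨C, rfl⟩ := CStarAlgebra.nonneg_iff_eq_star_mul_self.mp hH.nonneg
  rw [star_eq_conjTranspose, ← Matrix.mul_assoc, trace_mul_cycle]
  exact (hA.mul_mul_conjTranspose_same C).trace_nonneg

lemma PosSemidef.re_trace_mul_nonneg (hA : A.PosSemidef) (hH : H.PosSemidef) :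
    0 ≤ (A * H).trace.re :=
  (Complex.nonneg_iff.mp (hA.trace_mul_nonneg hH)).1

lemma PosSemidef.ofReal_re_trace_mul (hA : A.PosSemidef) (hH : H.PosSemidef) :
    ((A * H).trace.re : ℂ) = (A * H).trace :=
  Complex.ofReal_re_of_nonneg (hA.trace_mul_nonneg hH)

open scoped MatrixOrder in
lemma PosDef.exists_pos_posSemidef_sub_smul_one [DecidableEq m] (hg : g.PosDef) :
    ∃ ε : ℝ, 0 < ε ∧ (g - ε • (1 : Matrix m m ℂ)).PosSemidef := by
  cases isEmpty_or_nonempty m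
  · exact ⟨1, one_pos, by simp [Subsingleton.elim _ (0 : Matrix m m ℂ), PosSemidef.zero]⟩
  obtain ⟨ε, hε, hle⟩ := (CFC.exists_pos_algebraMap_le_iff hg.isHermitian.isSelfAdjoint).2
    fun x hx => hg.isStrictlyPositive.spectrum_pos hx
  rw [Algebra.algebraMap_eq_smul_one] at hle
  exact ⟨ε, hε, hle⟩

lemma PosDef.exists_pos_mul_re_trace_le (hg : g.PosDef) :
    ∃ ε : ℝ, 0 < ε ∧ ∀ A : Matrix m m ℂ, A.PosSemidef → ε * A.trace.re ≤ (A * g).trace.re := by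
  classical
  obtain ⟨ε, hε, hgap⟩ := hg.exists_pos_posSemidef_sub_smul_one
  refine ⟨ε, hε, fun A hA => ?_⟩
  have h := hA.re_trace_mul_nonneg hgap
  simp only [Matrix.mul_sub, Matrix.mul_smul, Matrix.mul_one, trace_sub, trace_smul,
    Complex.sub_re, Complex.real_smul, Complex.re_ofReal_mul] at h
  linarith

lemma PosSemidef.re_trace_mul_pos (hA : A.PosSemidef) (hg : g.PosDef) (hA0 : A ≠ 0) :
    0 < (A * g).trace.re := by
  obtain ⟨ε, hε, hle⟩ := hg.exists_pos_mul_re_trace_le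
  have htr : 0 < A.trace.re := by
    refine lt_of_le_of_ne (Complex.nonneg_iff.mp hA.trace_nonneg).1 fun h => hA0 ?_
    rw [← hA.trace_eq_zero_iff, ← Complex.ofReal_re_of_nonneg hA.trace_nonneg, ← h,
      Complex.ofReal_zero]
  exact (mul_pos hε htr).trans_le (hle A hA)

end Matrix

/-- `{x | ∃ b ∈ B, -b ≤ x ≤ b}` in the Loewner order. -/
def orderInterval (B : Set (Matrix (Fin n) (Fin n) ℂ)) : Set (Matrix (Fin n) (Fin n) ℂ) :=
  {x | ∃ b ∈ B, (b - x).PosSemidef ∧ (b + x).PosSemidef}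

theorem OB_eq_orderInterval (B : Set (Matrix (Fin n) (Fin n) ℂ)) : OB B = orderInterval B := by
  ext x
  constructor
  · rintro ⟨x₁, x₂, h₁, h₂, hB, rfl⟩
    refine ⟨x₁ + x₂, hB, ?_, ?_⟩
    · simpa [two_smul] using h₂.smul (zero_le_two : (0 : ℝ) ≤ 2)
    · simpa [two_smul] using h₁.smul (zero_le_two : (0 : ℝ) ≤ 2)
  · rintro ⟨b, hb, h₁, h₂⟩
    refine ⟨(2⁻¹ : ℝ) • (b + x), (2⁻¹ : ℝ) • (b - x), h₂.smul (by norm_num), h₁.smul (by norm_num),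
      ?_, ?_⟩
    · convert hb using 1
      module
    · module

theorem isClosed_orderInterval {B : Set (Matrix (Fin n) (Fin n) ℂ)} (hB : IsCompact B) :
    IsClosed (orderInterval B) := by
  have : CompactSpace B := isCompact_iff_compactSpace.mp hB
  have hclosed : IsClosed {p : B × Matrix (Fin n) (Fin n) ℂ |
      (↑p.1 - p.2).PosSemidef ∧ (↑p.1 + p.2).PosSemidef} :=
    (isClosed_setOf_posSemidef.preimage (by fun_prop)).inter
      (isClosed_setOf_posSemidef.preimage (by fun_prop))
  convert isClosedMap_snd_of_compactSpace _ hclosed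
  ext x
  simp [orderInterval, and_left_comm]

lemma baseNormM_le {B : Set (Matrix (Fin n) (Fin n) ℂ)} {x b₁ b₂ : Matrix (Fin n) (Fin n) ℂ}
    {s t : ℝ} (hb₁ : b₁ ∈ B) (hb₂ : b₂ ∈ B) (hs : 0 ≤ s) (ht : 0 ≤ t) (hx : x = s • b₁ - t • b₂) :
    baseNormM B x ≤ s + t :=
  csInf_le ⟨0, by rintro r ⟨s, t, -, -, -, -, hs, ht, -, rfl⟩; positivity⟩
    ⟨s, t, b₁, hb₁, b₂, hb₂, hs, ht, hx, rfl⟩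

lemma exists_lt_of_baseNormM_lt {B : Set (Matrix (Fin n) (Fin n) ℂ)}
    {x b₁ b₂ : Matrix (Fin n) (Fin n) ℂ} {s t r : ℝ} (hb₁ : b₁ ∈ B) (hb₂ : b₂ ∈ B)
    (hs : 0 ≤ s) (ht : 0 ≤ t) (hx : x = s • b₁ - t • b₂) (hr : baseNormM B x < r) :
    ∃ s t : ℝ, ∃ b₁ ∈ B, ∃ b₂ ∈ B, 0 ≤ s ∧ 0 ≤ t ∧ x = s • b₁ - t • b₂ ∧ s + t < r := by
  obtain ⟨_, ⟨s, t, b₁, hb₁, b₂, hb₂, hs, ht, hx, rfl⟩, hlt⟩ :=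
    exists_lt_of_csInf_lt (by exact ⟨s + t, s, t, b₁, hb₁, b₂, hb₂, hs, ht, hx, rfl⟩) hr
  exact ⟨s, t, b₁, hb₁, b₂, hb₂, hs, ht, hx, hlt⟩

section BaseSection

variable {L : Submodule ℝ (Matrix (Fin n) (Fin n) ℂ)} {g b₀ : Matrix (Fin n) (Fin n) ℂ}

local notation "𝔹" => (L : Set (Matrix (Fin n) (Fin n) ℂ)) ∩ Sb g

lemma isCompact_section (hg : g.PosDef) : IsCompact 𝔹 := by
  obtain ⟨ε, hε, hle⟩ := hg.exists_pos_mul_re_trace_le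
  have hclosed : IsClosed 𝔹 :=
    L.closed_of_finiteDimensional.inter
      (isClosed_setOf_posSemidef.inter (isClosed_eq (by fun_prop) continuous_const))
  refine (isCompact_univ_pi fun _ => isCompact_univ_pi fun _ =>
    isCompact_closedBall (0 : ℂ) ε⁻¹).of_isClosed_subset hclosed
    fun (b : Matrix (Fin n) (Fin n) ℂ) ⟨_, hb, hbg⟩ i _ j _ => ?_
  have htr : ε * b.trace.re ≤ 1 := by simpa [hbg] using hle b hb
  rw [mem_closedBall_zero_iff]
  refine (hb.norm_apply_le_re_trace i j).trans ?_
  rw [← one_div, le_div_iff₀ hε]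
  linarith

lemma exists_mem_section_eq_smul (hg : g.PosDef) (hb₀ : b₀ ∈ 𝔹)
    {a : Matrix (Fin n) (Fin n) ℂ} (haL : a ∈ L) (ha : a.PosSemidef) :
    ∃ b ∈ 𝔹, a = (a * g).trace.re • b := by
  obtain rfl | ha0 := eq_or_ne a 0
  · exact ⟨b₀, hb₀, by simp⟩
  have ht := ha.ofReal_re_trace_mul hg.posSemidef
  set t := (a * g).trace.re
  have hpos : 0 < t := ha.re_trace_mul_pos hg ha0
  refine ⟨t⁻¹ • a, ⟨L.smul_mem _ haL, ha.smul (inv_nonneg.mpr hpos.le), ?_⟩, ?_⟩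
  · rw [Matrix.smul_mul, trace_smul, ← ht, Complex.real_smul, ← Complex.ofReal_mul,
      inv_mul_cancel₀ hpos.ne', Complex.ofReal_one]
  · rw [smul_smul, mul_inv_cancel₀ hpos.ne', one_smul]

lemma exists_posSemidef_sub_of_mem_span {x : Matrix (Fin n) (Fin n) ℂ}
    (hx : x ∈ Submodule.span ℝ 𝔹) :
    ∃ a₁ a₂, a₁ ∈ L ∧ a₁.PosSemidef ∧ a₂ ∈ L ∧ a₂.PosSemidef ∧ x = a₁ - a₂ := by
  induction hx using Submodule.span_induction with
  | mem b hb => exact ⟨b, 0, hb.1, hb.2.1, L.zero_mem, .zero, (sub_zero b).symm⟩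
  | zero => exact ⟨0, 0, L.zero_mem, .zero, L.zero_mem, .zero, (sub_zero 0).symm⟩
  | add x y _ _ hx hy =>
    obtain ⟨a₁, a₂, ha₁L, ha₁, ha₂L, ha₂, rfl⟩ := hx
    obtain ⟨a₁', a₂', ha₁L', ha₁', ha₂L', ha₂', rfl⟩ := hy
    exact ⟨a₁ + a₁', a₂ + a₂', L.add_mem ha₁L ha₁L', ha₁.add ha₁', L.add_mem ha₂L ha₂L',
      ha₂.add ha₂', by abel⟩
  | smul r x _ hx =>
    obtain ⟨a₁, a₂, ha₁L, ha₁, ha₂L, ha₂, rfl⟩ := hx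
    rcases le_total 0 r with hr | hr
    · exact ⟨r • a₁, r • a₂, L.smul_mem r ha₁L, ha₁.smul hr, L.smul_mem r ha₂L, ha₂.smul hr,
        smul_sub r a₁ a₂⟩
    · refine ⟨(-r) • a₂, (-r) • a₁, L.smul_mem _ ha₂L, ha₂.smul (neg_nonneg.mpr hr),
        L.smul_mem _ ha₁L, ha₁.smul (neg_nonneg.mpr hr), ?_⟩
      module

/-- The witness is `c` padded with a multiple of `b₀`, raising its `g`-trace to exactly `1`. -/
lemma mem_orderInterval_of_posSemidef (hg : g.PosSemidef) (hb₀ : b₀ ∈ 𝔹)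
    {c x : Matrix (Fin n) (Fin n) ℂ} (hcL : c ∈ L) (hc : c.PosSemidef) (hcg : (c * g).trace.re ≤ 1)
    (hsub : (c - x).PosSemidef) (hadd : (c + x).PosSemidef) :
    x ∈ orderInterval 𝔹 := by
  obtain ⟨hb₀L, hb₀, hb₀g⟩ := hb₀
  have ht := hc.ofReal_re_trace_mul hg
  set t := (c * g).trace.re
  have hu : 0 ≤ 1 - t := sub_nonneg.mpr hcg
  refine ⟨c + (1 - t) • b₀, ⟨L.add_mem hcL (L.smul_mem _ hb₀L), hc.add (hb₀.smul hu), ?_⟩, ?_, ?_⟩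
  · rw [Matrix.add_mul, Matrix.smul_mul, trace_add, trace_smul, hb₀g, ← ht, Complex.real_smul]
    push_cast
    ring
  · simpa only [add_sub_right_comm] using hsub.add (hb₀.smul hu)
  · simpa only [add_right_comm] using hadd.add (hb₀.smul hu)

lemma baseNormM_le_one_of_mem_OB (hg : g.PosDef) (hb₀ : b₀ ∈ 𝔹)
    {x : Matrix (Fin n) (Fin n) ℂ} (hx : x ∈ OB 𝔹) (hxs : x ∈ Submodule.span ℝ 𝔹) :
    baseNormM 𝔹 x ≤ 1 := by
  obtain ⟨x₁, x₂, hx₁, hx₂, ⟨hcL, -, hcg⟩, rfl⟩ := hx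
  have hxL : x₁ - x₂ ∈ L := Submodule.span_le.mpr Set.inter_subset_left hxs
  have hx₁L : x₁ ∈ L := by
    convert L.smul_mem (2⁻¹ : ℝ) (L.add_mem hcL hxL) using 1
    module
  have hx₂L : x₂ ∈ L := by simpa using L.sub_mem hcL hx₁L
  obtain ⟨b₁, hb₁, hxb₁⟩ := exists_mem_section_eq_smul hg hb₀ hx₁L hx₁
  obtain ⟨b₂, hb₂, hxb₂⟩ := exists_mem_section_eq_smul hg hb₀ hx₂L hx₂
  calc baseNormM _ (x₁ - x₂) ≤ (x₁ * g).trace.re + (x₂ * g).trace.re :=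
        baseNormM_le hb₁ hb₂ (hx₁.re_trace_mul_nonneg hg.posSemidef)
          (hx₂.re_trace_mul_nonneg hg.posSemidef) (by rw [← hxb₁, ← hxb₂])
    _ = 1 := by rw [← Complex.add_re, ← trace_add, ← Matrix.add_mul, hcg, Complex.one_re]

lemma mem_orderInterval_of_baseNormM_le_one (hg : g.PosDef) (hb₀ : b₀ ∈ 𝔹)
    {x : Matrix (Fin n) (Fin n) ℂ} (hxs : x ∈ Submodule.span ℝ 𝔹) (hx : baseNormM 𝔹 x ≤ 1) :
    x ∈ orderInterval 𝔹 := by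
  obtain ⟨a₁, a₂, ha₁L, ha₁, ha₂L, ha₂, hxa⟩ := exists_posSemidef_sub_of_mem_span hxs
  obtain ⟨b₁, hb₁, hab₁⟩ := exists_mem_section_eq_smul hg hb₀ ha₁L ha₁
  obtain ⟨b₂, hb₂, hab₂⟩ := exists_mem_section_eq_smul hg hb₀ ha₂L ha₂
  have hscaled : ∀ r ∈ Set.Ioo (0 : ℝ) 1, r • x ∈ orderInterval 𝔹 := by
    rintro r ⟨hr0, hr1⟩
    obtain ⟨s, t, b₁, hb₁, b₂, hb₂, hs, ht, hxst, hst⟩ := exists_lt_of_baseNormM_lt hb₁ hb₂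
      (ha₁.re_trace_mul_nonneg hg.posSemidef) (ha₂.re_trace_mul_nonneg hg.posSemidef)
      (by rw [hxa, ← hab₁, ← hab₂]) (hx.trans_lt ((one_lt_inv₀ hr0).mpr hr1))
    have hrst : r * s + r * t ≤ 1 := by
      have := mul_lt_mul_of_pos_left hst hr0
      rw [mul_inv_cancel₀ hr0.ne'] at this
      linarith
    refine mem_orderInterval_of_posSemidef hg.posSemidef hb₀ (c := (r * s) • b₁ + (r * t) • b₂)
      (L.add_mem (L.smul_mem _ hb₁.1) (L.smul_mem _ hb₂.1))
      ((hb₁.2.1.smul (by positivity)).add (hb₂.2.1.smul (by positivity))) ?_ ?_ ?_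
    · simpa [Matrix.add_mul, Matrix.smul_mul, hb₁.2.2, hb₂.2.2] using hrst
    · convert hb₂.2.1.smul (by positivity : 0 ≤ 2 * r * t) using 1
      rw [hxst]
      module
    · convert hb₁.2.1.smul (by positivity : 0 ≤ 2 * r * s) using 1
      rw [hxst]
      module
  have htendsto : Filter.Tendsto (fun r : ℝ => r • x) (nhdsWithin 1 (Set.Iio 1)) (nhds x) := by
    simpa using ((by fun_prop : Continuous fun r : ℝ => r • x).tendsto 1).mono_left
      nhdsWithin_le_nhds
  exact (isClosed_orderInterval (isCompact_section hg)).mem_of_tendsto htendsto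
    (Filter.eventually_of_mem (Ioo_mem_nhdsLT zero_lt_one) hscaled)

end BaseSection

/-- `O_B = {x : ∃ b ∈ B, -b ≤ x ≤ b}` and `O_B ∩ span(B)` is the unit ball of the base norm
on `span(B)`. -/
theorem stmt10 (B : Set (Matrix (Fin n) (Fin n) ℂ)) (hB : IsFaithfulSection B) :
    OB B = {x | ∃ b ∈ B, (b - x).PosSemidef ∧ (b + x).PosSemidef} ∧
    OB B ∩ (Submodule.span ℝ B : Submodule ℝ (Matrix (Fin n) (Fin n) ℂ)) =
      {x | x ∈ Submodule.span ℝ B ∧ baseNormM B x ≤ 1} := by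
  obtain ⟨⟨L, g, hg, rfl⟩, b₀, hb₀, -⟩ := hB
  refine ⟨OB_eq_orderInterval _, Set.ext fun x => ⟨?_, ?_⟩⟩
  · rintro ⟨hx, hxs⟩
    exact ⟨hxs, baseNormM_le_one_of_mem_OB hg hb₀ hx hxs⟩
  · rintro ⟨hxs, hx⟩
    rw [Set.mem_inter_iff, OB_eq_orderInterval]
    exact ⟨mem_orderInterval_of_baseNormM_le_one hg hb₀ hxs hx, hxs⟩
end

section
/- Let B be a faithful section of a base of B(H)^+ with dual section B̃, and let a ∈ B(H)^+. Then ‖a‖_B = sup_{b̃ ∈ B̃} Tr(a b̃) = inf_{b ∈ B} 2^{D_max(a‖b)}, where D_max(a‖b) = log inf{λ > 0 : a ≤ λb}. -/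
open Matrix ComplexOrder

variable {n : ℕ}

/-- The norm on `B_h(H)` whose unit ball is `O_B = {x : ∃ b ∈ B, -b ≤ x ≤ b}`. -/
noncomputable def secNorm (B : Set (Matrix (Fin n) (Fin n) ℂ))
    (x : Matrix (Fin n) (Fin n) ℂ) : ℝ :=
  sInf {t : ℝ | 0 ≤ t ∧ ∃ b ∈ B, (t • b - x).PosSemidef ∧ (t • b + x).PosSemidef}

/-- `2^{D_max(a‖b)} = inf{λ > 0 : a ≤ λ b}`, with value `∞` if no such `λ` exists. -/
noncomputable def expDmax (a b : Matrix (Fin n) (Fin n) ℂ) : ENNReal :=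
  ⨅ (r : ℝ) (_ : 0 < r) (_ : (r • b - a).PosSemidef), ENNReal.ofReal r

/-!
For positive `a`, the condition `-t b ≤ a ≤ t b` reduces to `a ≤ t b`, so `‖a‖_B` is the least
`t` with `a ≤ t b` for some `b ∈ B`, which is also `inf_b 2^{D_max(a‖b)}`. Weak duality
`Tr(a c) ≤ t` for `c ∈ B̃` is `Tr((t b - a) c) ≥ 0`. For strong duality, let `t < ‖a‖_B`
and let `S = {x ∈ L : x = xᴴ, Tr(x b₀) = 1}`, an affine space containing `B`. Then `t • S - a`
misses the open convex cone of matrices with positive definite Hermitian part, and a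
Hahn–Banach functional separating the two is nonnegative on positive matrices, vanishes on
anti-Hermitian ones and is constant on `S`. It is therefore `x ↦ Re Tr(x c)` for a positive `c`,
and `c`, normalised by its (positive) value on the faithful element of `B`, lies in `B̃` and
satisfies `Tr(a c) ≥ t`.
-/

open Filter Topology

theorem eq_zero_of_forall_le_add_mul {a b c : ℝ} (h : ∀ s, c ≤ a + s * b) : b = 0 := by
  by_contra hb
  have := h ((c - a - 1) / b)
  rw [div_mul_cancel₀ _ hb] at this
  linarith

theorem nonpos_of_forall_pos_mul_add_lt {b c u : ℝ} (h : ∀ s > 0, s * b + c < u) : b ≤ 0 := by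
  by_contra! hb
  have := h ((|u - c| + 1) / b) (by positivity)
  rw [div_mul_cancel₀ _ hb.ne'] at this
  linarith [le_abs_self (u - c)]

theorem nonneg_of_forall_pos_mul_lt {b u : ℝ} (h : ∀ s > 0, s * b < u) : 0 ≤ u := by
  have hlim : Tendsto (fun s : ℝ ↦ s * b) (𝓝[>] 0) (𝓝 0) :=
    (continuous_id.mul continuous_const).tendsto' 0 0 (by simp) |>.mono_left nhdsWithin_le_nhds
  exact le_of_tendsto hlim (eventually_nhdsWithin_of_forall fun s hs ↦ (h s hs).le)

namespace Matrix

variable {ι : Type*}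

theorem map_conjTranspose_of_map_I_smul_eq_zero {G : Module.Dual ℝ (Matrix ι ι ℂ)}
    (hGI : ∀ h : Matrix ι ι ℂ, h.IsHermitian → G (Complex.I • h) = 0) (y : Matrix ι ι ℂ) :
    G yᴴ = G y := by
  have hh : (-Complex.I • (y - yᴴ)).IsHermitian := by
    simp [IsHermitian, conjTranspose_smul, smul_sub, add_comm]
  have := hGI _ hh
  rw [smul_smul, show Complex.I * -Complex.I = 1 by simp, one_smul, map_sub] at this
  linarith

variable [Fintype ι]

theorem trace_vecMulVec_star_mul (v : ι → ℂ) (c : Matrix ι ι ℂ) :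
    (vecMulVec v (star v) * c).trace = star v ⬝ᵥ c *ᵥ v := by
  rw [vecMulVec_mul, trace_vecMulVec, dotProduct_comm, dotProduct_mulVec]

theorem PosSemidef.trace_mul_nonneg_s13 {p c : Matrix ι ι ℂ} (hp : p.PosSemidef)
    (hc : c.PosSemidef) : 0 ≤ (p * c).trace := by
  obtain ⟨m, v, rfl⟩ := posSemidef_iff_eq_sum_vecMulVec.mp hp
  rw [Finset.sum_mul, trace_sum]
  exact Finset.sum_nonneg fun i _ ↦
    trace_vecMulVec_star_mul (v i) c ▸ hc.dotProduct_mulVec_nonneg (v i)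

/-- Matrices with positive definite Hermitian part; unlike `PosDef`, an open set, as the separation
argument below requires. -/
def strictlyAccretive : Set (Matrix ι ι ℂ) :=
  {x | ∀ v ≠ 0, 0 < (star v ⬝ᵥ x *ᵥ v).re}

theorem PosDef.mem_strictlyAccretive {x : Matrix ι ι ℂ} (hx : x.PosDef) :
    x ∈ strictlyAccretive := fun _ hv ↦ hx.re_dotProduct_pos hv

theorem IsHermitian.posDef_of_mem_strictlyAccretive {x : Matrix ι ι ℂ} (hx : x.IsHermitian)
    (hxU : x ∈ strictlyAccretive) : x.PosDef :=
  .of_dotProduct_mulVec_pos hx fun v hv ↦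
    Complex.lt_def.mpr ⟨hxU v hv, (hx.im_star_dotProduct_mulVec_self v).symm⟩

theorem add_I_smul_mem_strictlyAccretive {x h : Matrix ι ι ℂ} (hx : x ∈ strictlyAccretive)
    (hh : h.IsHermitian) : x + Complex.I • h ∈ strictlyAccretive := fun v hv ↦ by
  have him : (star v ⬝ᵥ h *ᵥ v).im = 0 := hh.im_star_dotProduct_mulVec_self v
  simpa [add_mulVec, smul_mulVec, him] using hx v hv

theorem convex_strictlyAccretive : Convex ℝ (strictlyAccretive (ι := ι)) := by
  intro x hx y hy α β hα hβ hαβ v hv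
  simp only [add_mulVec, smul_mulVec, dotProduct_add, dotProduct_smul, Complex.add_re,
    Complex.real_smul, Complex.re_ofReal_mul]
  rcases hα.eq_or_lt with rfl | hα
  · simpa [show β = 1 by linarith] using hy v hv
  · exact add_pos_of_pos_of_nonneg (mul_pos hα (hx v hv)) (mul_nonneg hβ (hy v hv).le)

theorem isOpen_strictlyAccretive : IsOpen (strictlyAccretive (ι := ι)) := by
  have hsphere : strictlyAccretive (ι := ι) =
      {x | ∀ v ∈ Metric.sphere (0 : ι → ℂ) 1, 0 < (star v ⬝ᵥ x *ᵥ v).re} := by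
    ext x
    refine ⟨fun hx v hv ↦ hx v (ne_zero_of_mem_unit_sphere ⟨v, hv⟩), fun hx v hv ↦ ?_⟩
    have hv' : 0 < ‖v‖ := norm_pos_iff.mpr hv
    have := hx ((‖v‖⁻¹ : ℂ) • v) (by simp [norm_smul, hv'.ne'])
    simp only [star_smul, mulVec_smul, dotProduct_smul, smul_dotProduct, smul_eq_mul,
      ← mul_assoc, Complex.star_def, ← Complex.ofReal_inv, Complex.conj_ofReal,
      ← Complex.ofReal_mul, Complex.re_ofReal_mul] at this
    exact pos_of_mul_pos_right this (by positivity)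
  rw [hsphere, isOpen_iff_eventually]
  intro x hx
  have hcont : Continuous fun p : Matrix ι ι ℂ × (ι → ℂ) ↦ (star p.2 ⬝ᵥ p.1 *ᵥ p.2).re := by
    fun_prop
  exact (isCompact_sphere 0 1).eventually_forall_of_forall_eventually fun v hv ↦
    hcont.continuousAt.eventually (eventually_gt_nhds (hx v hv))

theorem PosDef.exists_pos_smul_sub_posSemidef {a b : Matrix ι ι ℂ} (hb : b.PosDef)
    (ha : a.IsHermitian) : ∃ t : ℝ, 0 < t ∧ (t • b - a).PosSemidef := by
  have hev : ∀ᶠ ε in 𝓝 (0 : ℝ), b - ε • a ∈ strictlyAccretive :=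
    (show Continuous fun ε : ℝ ↦ b - ε • a by fun_prop).continuousAt.preimage_mem_nhds
      (isOpen_strictlyAccretive.mem_nhds (by simpa using hb.mem_strictlyAccretive))
  obtain ⟨ε, hεU, hε⟩ :=
    ((hev.filter_mono nhdsWithin_le_nhds).and (self_mem_nhdsWithin (s := Set.Ioi 0))).exists
  have hPD := (hb.1.sub (ha.smul (IsSelfAdjoint.all ε))).posDef_of_mem_strictlyAccretive hεU
  refine ⟨ε⁻¹, inv_pos.mpr hε, ?_⟩
  convert hPD.posSemidef.smul (inv_pos.mpr hε).le using 1
  rw [smul_sub, smul_smul, inv_mul_cancel₀ hε.ne', one_smul]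

theorem disjoint_strictlyAccretive_image_smul_sub {S : Set (Matrix ι ι ℂ)}
    (hSH : ∀ x ∈ S, x.IsHermitian) {a : Matrix ι ι ℂ} (ha : a.IsHermitian) {t : ℝ}
    (hsep : ∀ x ∈ S, ¬ (t • x - a).PosSemidef) :
    Disjoint strictlyAccretive ((fun x ↦ t • x - a) '' S) := by
  refine Set.disjoint_right.mpr ?_
  rintro _ ⟨x, hx, rfl⟩ hxU
  exact hsep x hx ((((hSH x hx).smul (IsSelfAdjoint.all t)).sub ha
    ).posDef_of_mem_strictlyAccretive hxU).posSemidef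

variable [DecidableEq ι]

section BoundedOnStrictlyAccretive

variable {f : Module.Dual ℝ (Matrix ι ι ℂ)} {u : ℝ}

theorem nonneg_of_forall_mem_strictlyAccretive_lt (hf : ∀ x ∈ strictlyAccretive, f x < u) :
    0 ≤ u :=
  nonneg_of_forall_pos_mul_lt fun s hs ↦ by
    simpa using hf _ (PosDef.one.smul hs).mem_strictlyAccretive

theorem map_nonpos_of_forall_mem_strictlyAccretive_lt (hf : ∀ x ∈ strictlyAccretive, f x < u)
    {p : Matrix ι ι ℂ} (hp : p.PosSemidef) : f p ≤ 0 :=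
  nonpos_of_forall_pos_mul_add_lt fun s hs ↦ by
    simpa [add_comm] using hf _ (PosDef.one.add_posSemidef (hp.smul hs.le)).mem_strictlyAccretive

theorem map_I_smul_eq_zero_of_forall_mem_strictlyAccretive_lt
    (hf : ∀ x ∈ strictlyAccretive, f x < u) {h : Matrix ι ι ℂ} (hh : h.IsHermitian) :
    f (Complex.I • h) = 0 :=
  neg_eq_zero.mp <| eq_zero_of_forall_le_add_mul (a := -f 1) (c := -u) fun s ↦ by
    have := hf _ (add_I_smul_mem_strictlyAccretive PosDef.one.mem_strictlyAccretive
      (hh.smul (IsSelfAdjoint.all s)))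
    rw [map_add, smul_comm, map_smul, smul_eq_mul] at this
    linarith

end BoundedOnStrictlyAccretive

/-- Hahn–Banach separation of the open convex cone `strictlyAccretive` from the affine set
`t • S - a`. -/
theorem exists_separating_functional (S : AffineSubspace ℝ (Matrix ι ι ℂ))
    (hSH : ∀ x ∈ S, x.IsHermitian) {a b₁ : Matrix ι ι ℂ} {t : ℝ} (ht : 0 < t)
    (ha : a.IsHermitian) (hb₁S : b₁ ∈ S) (hb₁ : b₁.PosDef)
    (hsep : ∀ x ∈ S, ¬ (t • x - a).PosSemidef) :
    ∃ G : Module.Dual ℝ (Matrix ι ι ℂ), (∀ p : Matrix ι ι ℂ, p.PosSemidef → 0 ≤ G p) ∧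
      (∀ h : Matrix ι ι ℂ, h.IsHermitian → G (Complex.I • h) = 0) ∧
      (∀ x ∈ S, G x = G b₁) ∧ 0 < G b₁ ∧ t * G b₁ ≤ G a := by
  have hconv : Convex ℝ ((fun x ↦ t • x - a) '' S) := by
    rintro _ ⟨x, hx, rfl⟩ _ ⟨y, hy, rfl⟩ α β hα hβ hαβ
    refine ⟨α • x + β • y, S.convex hx hy hα hβ hαβ, ?_⟩
    obtain rfl : β = 1 - α := by linarith
    module
  obtain ⟨f, u, hfU, hfS⟩ := geometric_hahn_banach_open convex_strictlyAccretive
    isOpen_strictlyAccretive hconv (disjoint_strictlyAccretive_image_smul_sub hSH ha hsep)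
  have hfS' : ∀ x ∈ S, u ≤ t * f x - f a := fun x hx ↦ by
    simpa using hfS _ ⟨x, hx, rfl⟩
  have hfPSD : ∀ p : Matrix ι ι ℂ, p.PosSemidef → f p ≤ 0 := fun _ ↦
    map_nonpos_of_forall_mem_strictlyAccretive_lt (f := f.toLinearMap) hfU
  have hfconst : ∀ x ∈ S, f x = f b₁ := fun x hx ↦ by
    have := eq_zero_of_forall_le_add_mul (a := t * f b₁ - f a) (b := t * (f x - f b₁)) (c := u)
      fun s ↦ by
        have := hfS' _ (AffineMap.lineMap_mem s hb₁S hx)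
        rw [AffineMap.lineMap_apply_module', map_add, map_smul, map_sub, smul_eq_mul] at this
        linarith
    exact sub_eq_zero.mp ((mul_eq_zero.mp this).resolve_left ht.ne')
  have hfb₁ : f b₁ < 0 := by
    refine lt_of_le_of_ne (hfPSD _ hb₁.posSemidef) fun h ↦ ?_
    obtain ⟨r, -, hra⟩ := hb₁.exists_pos_smul_sub_posSemidef ha
    have := hfPSD _ hra
    have := hfU b₁ hb₁.mem_strictlyAccretive
    have := hfS' b₁ hb₁S
    simp only [map_sub, map_smul, smul_eq_mul, h] at *
    linarith
  have hu := nonneg_of_forall_mem_strictlyAccretive_lt (f := f.toLinearMap) hfU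
  have := hfS' b₁ hb₁S
  refine ⟨-f.toLinearMap, fun p hp ↦ by simpa using hfPSD p hp,
    fun h hh ↦ by simp [map_I_smul_eq_zero_of_forall_mem_strictlyAccretive_lt
      (f := f.toLinearMap) hfU hh],
    fun x hx ↦ by simp [hfconst x hx], by simpa using hfb₁, ?_⟩
  simp only [LinearMap.neg_apply, ContinuousLinearMap.coe_coe]
  linarith


theorem exists_trace_mul_eq (φ : Module.Dual ℂ (Matrix ι ι ℂ)) :
    ∃ c : Matrix ι ι ℂ, ∀ x, (x * c).trace = φ x := by
  refine ⟨of fun i j ↦ φ (single j i 1), fun x ↦ ?_⟩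
  conv_rhs => rw [matrix_eq_sum_single x]
  conv_lhs => rw [matrix_eq_sum_single x]
  simp only [Matrix.sum_mul, trace_sum, map_sum, trace_single_mul, of_apply, smul_eq_mul]
  refine Finset.sum_congr rfl fun i _ ↦ Finset.sum_congr rfl fun j _ ↦ ?_
  rw [← smul_eq_mul, ← map_smul, smul_single, smul_eq_mul, mul_one]

theorem exists_posSemidef_trace_mul_eq (G : Module.Dual ℝ (Matrix ι ι ℂ))
    (hG : ∀ p : Matrix ι ι ℂ, p.PosSemidef → 0 ≤ G p)
    (hGI : ∀ h : Matrix ι ι ℂ, h.IsHermitian → G (Complex.I • h) = 0) :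
    ∃ c : Matrix ι ι ℂ, c.PosSemidef ∧ ∀ x, x.IsHermitian → (x * c).trace = G x := by
  set φ : Module.Dual ℂ (Matrix ι ι ℂ) := G.extendRCLike
  have hφ : ∀ x : Matrix ι ι ℂ, x.IsHermitian → φ x = G x := fun x hx ↦ by
    simp [φ, Module.Dual.extendRCLike_apply, hGI x hx]
  have hφstar : ∀ y : Matrix ι ι ℂ, φ yᴴ = star (φ y) := fun y ↦ by
    have : G (Complex.I • yᴴ) = -G (Complex.I • y) := by
      rw [← map_conjTranspose_of_map_I_smul_eq_zero hGI, conjTranspose_smul,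
        conjTranspose_conjTranspose, Complex.star_def, Complex.conj_I, neg_smul, map_neg]
    simp [φ, Module.Dual.extendRCLike_apply, this, map_conjTranspose_of_map_I_smul_eq_zero hGI]
  obtain ⟨c, hc⟩ := exists_trace_mul_eq φ
  have hcH : c.IsHermitian := by
    refine ext_iff_trace_mul_left.mpr fun x ↦ ?_
    calc (x * cᴴ).trace = star (xᴴ * c).trace := by
          rw [← trace_conjTranspose, conjTranspose_mul, conjTranspose_conjTranspose,
            trace_mul_comm]
      _ = (x * c).trace := by rw [hc, hc, hφstar, star_star]
  refine ⟨c, .of_dotProduct_mulVec_nonneg hcH fun v ↦ ?_, fun x hx ↦ (hc x).trans (hφ x hx)⟩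
  rw [← trace_vecMulVec_star_mul, hc, hφ _ (posSemidef_vecMulVec_self_star v).1]
  exact Complex.zero_le_real.mpr (hG _ (posSemidef_vecMulVec_self_star v))

def hermSlice (L : Submodule ℝ (Matrix ι ι ℂ)) (b₀ : Matrix ι ι ℂ) :
    AffineSubspace ℝ (Matrix ι ι ℂ) where
  carrier := {x | x ∈ L ∧ x.IsHermitian ∧ (x * b₀).trace = 1}
  smul_vsub_vadd_mem' c x y z hx hy hz := by
    refine ⟨L.add_mem (L.smul_mem c (L.sub_mem hx.1 hy.1)) hz.1,
      ((hx.2.1.sub hy.2.1).smul (IsSelfAdjoint.all c)).add hz.2.1, ?_⟩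
    simp [Matrix.add_mul, Matrix.sub_mul, hx.2.2, hy.2.2, hz.2.2]

end Matrix

theorem mem_inter_Sb_iff {L : Submodule ℝ (Matrix (Fin n) (Fin n) ℂ)}
    {b₀ b : Matrix (Fin n) (Fin n) ℂ} :
    b ∈ (L : Set (Matrix (Fin n) (Fin n) ℂ)) ∩ Sb b₀ ↔ b ∈ hermSlice L b₀ ∧ b.PosSemidef :=
  ⟨fun ⟨hL, hb, htr⟩ ↦ ⟨⟨hL, hb.1, htr⟩, hb⟩, fun ⟨⟨hL, _, htr⟩, hb⟩ ↦ ⟨hL, hb, htr⟩⟩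

theorem exists_mem_dualSection_le_re_trace {L : Submodule ℝ (Matrix (Fin n) (Fin n) ℂ)}
    {b₀ b₁ a : Matrix (Fin n) (Fin n) ℂ} {t : ℝ}
    (hb₁B : b₁ ∈ (L : Set (Matrix (Fin n) (Fin n) ℂ)) ∩ Sb b₀) (hb₁ : b₁.PosDef)
    (ha : a.PosSemidef) (ht : 0 < t)
    (hsep : ∀ b ∈ (L : Set (Matrix (Fin n) (Fin n) ℂ)) ∩ Sb b₀, ¬ (t • b - a).PosSemidef) :
    ∃ c ∈ dualSection ((L : Set (Matrix (Fin n) (Fin n) ℂ)) ∩ Sb b₀),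
      t ≤ ((a * c).trace).re := by
  have hsep' : ∀ x ∈ hermSlice L b₀, ¬ (t • x - a).PosSemidef := fun x hx hxa ↦ by
    have hx' : x.PosSemidef := by
      simpa [smul_smul, inv_mul_cancel₀ ht.ne'] using (hxa.add ha).smul (inv_pos.mpr ht).le
    exact hsep x (mem_inter_Sb_iff.mpr ⟨hx, hx'⟩) hxa
  obtain ⟨G, hGpos, hGI, hGS, hGb₁, hGa⟩ := exists_separating_functional (hermSlice L b₀)
    (fun x hx ↦ hx.2.1) ht ha.1 (mem_inter_Sb_iff.mp hb₁B).1 hb₁ hsep'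
  obtain ⟨c, hc, hcG⟩ := exists_posSemidef_trace_mul_eq G hGpos hGI
  refine ⟨(G b₁)⁻¹ • c, ⟨hc.smul (inv_nonneg.mpr hGb₁.le), fun b hb ↦ ?_⟩, ?_⟩
  · obtain ⟨hbS, hb⟩ := mem_inter_Sb_iff.mp hb
    rw [Matrix.mul_smul, trace_smul, hcG b hb.1, hGS b hbS, Complex.real_smul,
      ← Complex.ofReal_mul, inv_mul_cancel₀ hGb₁.ne', Complex.ofReal_one]
  · rw [Matrix.mul_smul, trace_smul, hcG a ha.1, Complex.real_smul, ← Complex.ofReal_mul,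
      Complex.ofReal_re, le_inv_mul_iff₀ hGb₁, mul_comm]
    exact hGa

def dominatingScales (B : Set (Matrix (Fin n) (Fin n) ℂ)) (a : Matrix (Fin n) (Fin n) ℂ) :
    Set ℝ :=
  {t | 0 ≤ t ∧ ∃ b ∈ B, (t • b - a).PosSemidef}

theorem secNorm_eq_sInf_dominatingScales {B : Set (Matrix (Fin n) (Fin n) ℂ)}
    {a : Matrix (Fin n) (Fin n) ℂ} (ha : a.PosSemidef) :
    secNorm B a = sInf (dominatingScales B a) := by
  refine congrArg sInf (Set.ext fun t ↦ and_congr_right fun _ ↦ exists_congr fun b ↦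
    and_congr_right fun _ ↦ and_iff_left_of_imp fun h ↦ ?_)
  simpa [sub_add_eq_add_sub, add_sub_assoc, two_smul] using h.add (ha.add ha)

theorem re_trace_mul_le_of_mem_dominatingScales {B : Set (Matrix (Fin n) (Fin n) ℂ)}
    {a c : Matrix (Fin n) (Fin n) ℂ} (hc : c ∈ dualSection B) {t : ℝ}
    (ht : t ∈ dominatingScales B a) : ((a * c).trace).re ≤ t := by
  obtain ⟨-, b, hb, hba⟩ := ht
  have := (Complex.nonneg_iff.mp (hba.trace_mul_nonneg_s13 hc.1)).1
  rw [Matrix.sub_mul, Matrix.smul_mul, trace_sub, trace_smul, hc.2 b hb] at this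
  simpa using this

theorem sSup_re_trace_dualSection_eq_sInf_dominatingScales
    {L : Submodule ℝ (Matrix (Fin n) (Fin n) ℂ)} {b₀ b₁ a : Matrix (Fin n) (Fin n) ℂ}
    (hb₀ : b₀.PosSemidef) (hb₁B : b₁ ∈ (L : Set (Matrix (Fin n) (Fin n) ℂ)) ∩ Sb b₀)
    (hb₁ : b₁.PosDef) (ha : a.PosSemidef) :
    sSup {r | ∃ c ∈ dualSection ((L : Set (Matrix (Fin n) (Fin n) ℂ)) ∩ Sb b₀),
      r = ((a * c).trace).re} = sInf (dominatingScales (↑L ∩ Sb b₀) a) := by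
  have hb₀B : b₀ ∈ dualSection ((L : Set (Matrix (Fin n) (Fin n) ℂ)) ∩ Sb b₀) :=
    ⟨hb₀, fun _ hb ↦ hb.2.2⟩
  obtain ⟨r, hr, hra⟩ := hb₁.exists_pos_smul_sub_posSemidef ha.1
  have hrT : r ∈ dominatingScales (↑L ∩ Sb b₀) a := ⟨hr.le, b₁, hb₁B, hra⟩
  have hTbdd : BddBelow (dominatingScales (↑L ∩ Sb b₀) a) := ⟨0, fun _ ht ↦ ht.1⟩
  have hSbdd : BddAbove {r | ∃ c ∈ dualSection ((L : Set (Matrix (Fin n) (Fin n) ℂ)) ∩ Sb b₀),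
      r = ((a * c).trace).re} := by
    refine ⟨r, ?_⟩
    rintro _ ⟨c, hc, rfl⟩
    exact re_trace_mul_le_of_mem_dominatingScales hc hrT
  apply le_antisymm
  · refine csSup_le ⟨_, b₀, hb₀B, rfl⟩ ?_
    rintro _ ⟨c, hc, rfl⟩
    exact le_csInf ⟨r, hrT⟩ fun t ht ↦ re_trace_mul_le_of_mem_dominatingScales hc ht
  · refine le_of_forall_lt_imp_le_of_dense fun t ht ↦ ?_
    rcases le_or_gt t 0 with ht0 | ht0
    · exact ht0.trans ((Complex.nonneg_iff.mp (ha.trace_mul_nonneg_s13 hb₀)).1.trans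
        (le_csSup hSbdd ⟨b₀, hb₀B, rfl⟩))
    · obtain ⟨c, hc, htc⟩ := exists_mem_dualSection_le_re_trace hb₁B hb₁ ha ht0
        fun b hb hba ↦ (not_le.mpr ht) (csInf_le hTbdd ⟨ht0.le, b, hb, hba⟩)
      exact htc.trans (le_csSup hSbdd ⟨c, hc, rfl⟩)

theorem ofReal_sInf_dominatingScales_eq_iInf_expDmax {B : Set (Matrix (Fin n) (Fin n) ℂ)}
    {a b₁ : Matrix (Fin n) (Fin n) ℂ} (ha : a.IsHermitian) (hB : ∀ b ∈ B, b.PosSemidef)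
    (hb₁B : b₁ ∈ B) (hb₁ : b₁.PosDef) :
    ENNReal.ofReal (sInf (dominatingScales B a)) = ⨅ b ∈ B, expDmax a b := by
  obtain ⟨r, hr, hra⟩ := hb₁.exists_pos_smul_sub_posSemidef ha
  have hTne : (dominatingScales B a).Nonempty := ⟨r, hr.le, b₁, hb₁B, hra⟩
  have hTbdd : BddBelow (dominatingScales B a) := ⟨0, fun _ ht ↦ ht.1⟩
  refine le_antisymm (le_iInf₂ fun b hb ↦ le_iInf₂ fun s hs ↦ le_iInf fun hsa ↦
    ENNReal.ofReal_le_ofReal (csInf_le hTbdd ⟨hs.le, b, hb, hsa⟩)) ?_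
  refine ENNReal.le_of_forall_pos_le_add fun ε hε _ ↦ ?_
  obtain ⟨t, ⟨ht0, b, hb, hba⟩, htlt⟩ := Real.lt_sInf_add_pos hTne (NNReal.coe_pos.mpr hε)
  have hT0 : 0 ≤ sInf (dominatingScales B a) := le_csInf hTne fun _ ht ↦ ht.1
  have hsba : ((sInf (dominatingScales B a) + ε) • b - a).PosSemidef := by
    convert hba.add ((hB b hb).smul (sub_nonneg.mpr htlt.le)) using 1
    module
  calc ⨅ b ∈ B, expDmax a b ≤ expDmax a b := iInf₂_le b hb
    _ ≤ ENNReal.ofReal (sInf (dominatingScales B a) + ε) :=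
        iInf₂_le_of_le _ (by positivity) (iInf_le _ hsba)
    _ = ENNReal.ofReal (sInf (dominatingScales B a)) + ε := by
        rw [ENNReal.ofReal_add hT0 ε.coe_nonneg, ENNReal.ofReal_coe_nnreal]

/-- For positive `a`, `‖a‖_B = sup_{b̃ ∈ B̃} Tr(a b̃) = inf_{b ∈ B} 2^{D_max(a‖b)}`. -/
theorem stmt13 (B : Set (Matrix (Fin n) (Fin n) ℂ)) (hB : IsFaithfulSection B)
    (a : Matrix (Fin n) (Fin n) ℂ) (ha : a.PosSemidef) :
    secNorm B a = sSup {r | ∃ c ∈ dualSection B, r = ((a * c).trace).re} ∧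
    ENNReal.ofReal (secNorm B a) = ⨅ b ∈ B, expDmax a b := by
  obtain ⟨⟨L, b₀, hb₀, rfl⟩, b₁, hb₁B, hb₁⟩ := hB
  rw [secNorm_eq_sInf_dominatingScales ha]
  exact ⟨(sSup_re_trace_dualSection_eq_sInf_dominatingScales hb₀.posSemidef hb₁B hb₁ ha).symm,
    ofReal_sInf_dominatingScales_eq_iInf_expDmax ha.1 (fun _ hb ↦ hb.2.1) hb₁B hb₁⟩
end

section
/- Let B be a faithful section of a base of B(H)^+, a ∈ B(H)^+, and b̃₀ ∈ B̃. Then ‖a‖_B = Tr(a b̃₀) if and only if there exists q ∈ Q = span(B) ∩ B(H)^+ with a ≤ q and (q − a)b̃₀ = 0; in that case q = ‖a‖_B · b₀ for some b₀ ∈ B and ‖a‖_B = 2^{D_max(a‖b₀)}. -/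
open Matrix ComplexOrder

variable {n : ℕ}

/-!
Since `a ≥ 0`, the constraint `-t • b ≤ a` in `secNorm` is vacuous, so `‖a‖_B` is the least `t`
with `a ≤ t • b` for some `b ∈ B`, and this infimum is attained because a section is compact.
Pairing `a ≤ t • b` with `c₀ ∈ B̃` gives `Tr(a c₀) ≤ t`, with equality iff `Tr((t • b - a) c₀) = 0`,
i.e. iff `(t • b - a) c₀ = 0`, since a trace of a product of positive matrices vanishes only when
the product does. Conversely, a positive `q ∈ span B` is `s • b₀` with `b₀ ∈ B` (normalise by
`Tr(q b)`, `b` the positive definite matrix cutting out the section), and a certificate `q` forces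
`s = Tr(a c₀) ≤ ‖a‖_B ≤ s`; so `s` is also the least scale for `b₀` alone, which is
`2^{D_max(a‖b₀)}`.
-/

-- The L2 operator norm makes complex matrices a C⋆-algebra; its topology is the entrywise one.
open scoped MatrixOrder Matrix.Norms.L2Operator

namespace Matrix

variable {ι : Type*} [Fintype ι]

lemma trace_star_mul_self_mul_mul_star_self (X Y : Matrix ι ι ℂ) :
    (star X * X * (Y * star Y)).trace = (X * Y * star (X * Y)).trace := by
  rw [star_mul, Matrix.mul_assoc, trace_mul_comm]
  simp only [Matrix.mul_assoc]

variable [DecidableEq ι]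

lemma trace_mul_nonneg_of_nonneg {A C : Matrix ι ι ℂ} (hA : 0 ≤ A) (hC : 0 ≤ C) :
    0 ≤ (A * C).trace := by
  obtain ⟨X, rfl⟩ := CStarAlgebra.nonneg_iff_eq_star_mul_self.mp hA
  obtain ⟨Y, rfl⟩ := CStarAlgebra.nonneg_iff_eq_mul_star_self.mp hC
  rw [trace_star_mul_self_mul_mul_star_self]
  exact (nonneg_iff_posSemidef.mp (mul_star_self_nonneg _)).trace_nonneg

lemma mul_eq_zero_of_trace_mul_eq_zero {A C : Matrix ι ι ℂ} (hA : 0 ≤ A) (hC : 0 ≤ C)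
    (h : (A * C).trace = 0) : A * C = 0 := by
  obtain ⟨X, rfl⟩ := CStarAlgebra.nonneg_iff_eq_star_mul_self.mp hA
  obtain ⟨Y, rfl⟩ := CStarAlgebra.nonneg_iff_eq_mul_star_self.mp hC
  rw [trace_star_mul_self_mul_mul_star_self] at h
  have hXY : X * Y = 0 := trace_mul_conjTranspose_self_eq_zero_iff.mp h
  rw [Matrix.mul_assoc, ← Matrix.mul_assoc X, hXY, Matrix.zero_mul, Matrix.mul_zero]

lemma norm_le_re_trace_of_nonneg {A : Matrix ι ι ℂ} (hA : 0 ≤ A) : ‖A‖ ≤ A.trace.re := by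
  rcases subsingleton_or_nontrivial (Matrix ι ι ℂ) with h | h
  · simp [Subsingleton.elim A 0]
  have hA' := nonneg_iff_posSemidef.mp hA
  obtain ⟨i, hi⟩ : ‖A‖ ∈ Set.range hA'.isHermitian.eigenvalues :=
    hA'.isHermitian.spectrum_real_eq_range_eigenvalues ▸
      CStarAlgebra.norm_mem_spectrum_of_nonneg hA
  rw [hA'.isHermitian.trace_eq_sum_eigenvalues, Complex.re_sum, ← hi]
  simp only [Complex.coe_algebraMap, Complex.ofReal_re]
  exact Finset.single_le_sum (fun j _ => hA'.eigenvalues_nonneg j) (Finset.mem_univ i)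

lemma PosDef.exists_pos_smul_one_le {b : Matrix ι ι ℂ} (hb : b.PosDef) :
    ∃ ε : ℝ, 0 < ε ∧ ε • (1 : Matrix ι ι ℂ) ≤ b := by
  rcases subsingleton_or_nontrivial (Matrix ι ι ℂ) with h | h
  · exact ⟨1, one_pos, (Subsingleton.elim _ _).le⟩
  obtain ⟨ε, hε, hεb⟩ := (CFC.exists_pos_algebraMap_le_iff hb.isHermitian.isSelfAdjoint).2
    fun x hx => hb.isStrictlyPositive.spectrum_pos hx
  exact ⟨ε, hε, by rwa [Algebra.algebraMap_eq_smul_one] at hεb⟩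

end Matrix

lemma isCompact_Sb {b : Matrix (Fin n) (Fin n) ℂ} (hb : b.PosDef) : IsCompact (Sb b) := by
  obtain ⟨ε, hε, hεb⟩ := hb.exists_pos_smul_one_le
  have hclosed : IsClosed (Sb b) := by
    have : Sb b = {a | 0 ≤ a} ∩ {a | (a * b).trace = 1} := by
      ext a; simp [Sb, nonneg_iff_posSemidef]
    rw [this]
    refine CStarAlgebra.isClosed_nonneg.inter (isClosed_eq ?_ continuous_const)
    exact (continuous_id.matrix_mul (continuous_const (y := b))).matrix_trace
  refine Metric.isCompact_of_isClosed_isBounded hclosed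
    ((Metric.isBounded_iff_subset_closedBall 0).2 ⟨ε⁻¹, fun a ⟨ha, hab⟩ => ?_⟩)
  have ha' := nonneg_iff_posSemidef.2 ha
  have h := trace_mul_nonneg_of_nonneg ha' (sub_nonneg.2 hεb)
  rw [Matrix.mul_sub, trace_sub, hab, Matrix.mul_smul, Matrix.mul_one, trace_smul] at h
  have h' : ε * a.trace.re ≤ 1 := by simpa using (Complex.nonneg_iff.1 h).1
  rw [mem_closedBall_zero_iff]
  exact (norm_le_re_trace_of_nonneg ha').trans (by rw [← one_div, le_div_iff₀ hε]; linarith)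

lemma expDmax_eq_ofReal {a b : Matrix (Fin n) (Fin n) ℂ} {s : ℝ} (hb : 0 ≤ b) (hs : 0 ≤ s)
    (has : a ≤ s • b) (hmin : ∀ r : ℝ, 0 < r → a ≤ r • b → s ≤ r) :
    expDmax a b = ENNReal.ofReal s := by
  refine le_antisymm ?_ (le_iInf₂ fun r hr => le_iInf fun hab =>
    ENNReal.ofReal_le_ofReal (hmin r hr hab))
  refine ENNReal.le_of_forall_pos_le_add fun δ hδ _ => ?_
  rw [← ENNReal.ofReal_coe_nnreal, ← ENNReal.ofReal_add hs δ.coe_nonneg]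
  refine iInf₂_le_of_le (s + δ) (by positivity) (iInf_le_of_le ?_ le_rfl)
  exact has.trans (smul_le_smul_of_nonneg_right (le_add_of_nonneg_right δ.2) hb)

def scalesAbove (B : Set (Matrix (Fin n) (Fin n) ℂ)) (a : Matrix (Fin n) (Fin n) ℂ) : Set ℝ :=
  {t | 0 ≤ t ∧ ∃ b ∈ B, a ≤ t • b}

section

variable {B : Set (Matrix (Fin n) (Fin n) ℂ)} {a c : Matrix (Fin n) (Fin n) ℂ}

lemma IsSection.isCompact (hB : IsSection B) : IsCompact B := by
  obtain ⟨L, b, hb, rfl⟩ := hB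
  exact (isCompact_Sb hb).inter_left L.closed_of_finiteDimensional

lemma IsSection.nonneg (hB : IsSection B) {b : Matrix (Fin n) (Fin n) ℂ} (hb : b ∈ B) : 0 ≤ b := by
  obtain ⟨L, b₁, -, rfl⟩ := hB
  exact nonneg_iff_posSemidef.2 hb.2.1

lemma IsSection.exists_eq_smul_of_mem_span (hB : IsSection B) (hne : B.Nonempty)
    {q : Matrix (Fin n) (Fin n) ℂ} (hq : q ∈ Submodule.span ℝ B) (hq0 : 0 ≤ q) :
    ∃ s : ℝ, 0 ≤ s ∧ ∃ b ∈ B, q = s • b := by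
  obtain ⟨L, b₁, hb₁, rfl⟩ := hB
  have hqL : q ∈ L := Submodule.span_le.2 Set.inter_subset_left hq
  have hb₁' := nonneg_iff_posSemidef.2 hb₁.posSemidef
  obtain ⟨s, hs0, hs⟩ : ∃ s : ℝ, 0 ≤ s ∧ (s : ℂ) = (q * b₁).trace :=
    RCLike.nonneg_iff_exists_ofReal.1 (trace_mul_nonneg_of_nonneg hq0 hb₁')
  rcases hs0.eq_or_lt with rfl | hspos
  · have hq : q = 0 := by
      have hz := mul_eq_zero_of_trace_mul_eq_zero hq0 hb₁' (by rw [← hs, Complex.ofReal_zero])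
      exact hb₁.isUnit.mul_left_eq_zero.1 hz
    obtain ⟨b, hb⟩ := hne
    exact ⟨0, le_rfl, b, hb, by rw [hq, zero_smul]⟩
  · refine ⟨s, hspos.le, s⁻¹ • q, ⟨L.smul_mem _ hqL, ?_, ?_⟩, (smul_inv_smul₀ hspos.ne' q).symm⟩
    · exact nonneg_iff_posSemidef.1 (smul_nonneg (inv_nonneg.2 hspos.le) hq0)
    · rw [Matrix.smul_mul, trace_smul, ← hs, Complex.real_smul, ← Complex.ofReal_mul,
        inv_mul_cancel₀ hspos.ne', Complex.ofReal_one]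

lemma secNorm_eq_sInf_scalesAbove (hB : ∀ b ∈ B, 0 ≤ b) (ha : 0 ≤ a) :
    secNorm B a = sInf (scalesAbove B a) := by
  refine congrArg sInf (Set.ext fun t => ⟨?_, ?_⟩)
  · rintro ⟨ht, b, hb, hab, -⟩
    exact ⟨ht, b, hb, hab⟩
  · rintro ⟨ht, b, hb, hab⟩
    exact ⟨ht, b, hb, hab, nonneg_iff_posSemidef.1 (add_nonneg (smul_nonneg ht (hB b hb)) ha)⟩

lemma scalesAbove_nonempty {b : Matrix (Fin n) (Fin n) ℂ} (hb : b ∈ B) (hb' : b.PosDef)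
    (ha : IsSelfAdjoint a) : (scalesAbove B a).Nonempty := by
  obtain ⟨ε, hε, hεb⟩ := hb'.exists_pos_smul_one_le
  refine ⟨‖a‖ / ε, by positivity, b, hb, ?_⟩
  calc a ≤ ‖a‖ • (1 : Matrix (Fin n) (Fin n) ℂ) := by
        simpa [Algebra.algebraMap_eq_smul_one] using ha.le_algebraMap_norm_self
    _ = (‖a‖ / ε) • ε • (1 : Matrix (Fin n) (Fin n) ℂ) := by
        rw [smul_smul, div_mul_cancel₀ _ hε.ne']
    _ ≤ (‖a‖ / ε) • b := smul_le_smul_of_nonneg_left hεb (by positivity)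

lemma isClosed_scalesAbove (hB : IsCompact B) : IsClosed (scalesAbove B a) := by
  have : CompactSpace B := isCompact_iff_compactSpace.1 hB
  have h : scalesAbove B a =
      Prod.fst '' {p : ℝ × B | 0 ≤ p.1 ∧ a ≤ p.1 • (p.2 : Matrix (Fin n) (Fin n) ℂ)} := by
    ext t
    simp [scalesAbove]
  rw [h]
  exact isClosedMap_fst_of_compactSpace _ ((isClosed_le continuous_const continuous_fst).inter
    (isClosed_le continuous_const
      (continuous_fst.smul (continuous_subtype_val.comp continuous_snd))))

lemma sInf_scalesAbove_mem (hB : IsCompact B) (hne : (scalesAbove B a).Nonempty) :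
    sInf (scalesAbove B a) ∈ scalesAbove B a :=
  (isClosed_scalesAbove hB).csInf_mem hne ⟨0, fun _ ht => ht.1⟩

lemma trace_smul_sub_mul_of_mem_dualSection (hc : c ∈ dualSection B)
    {b : Matrix (Fin n) (Fin n) ℂ} (hb : b ∈ B) (t : ℝ) :
    ((t • b - a) * c).trace = t - (a * c).trace := by
  rw [Matrix.sub_mul, trace_sub, Matrix.smul_mul, trace_smul, hc.2 b hb, Complex.real_smul,
    mul_one]

lemma re_trace_mul_le_of_mem_scalesAbove (hc : c ∈ dualSection B) {t : ℝ}
    (ht : t ∈ scalesAbove B a) : (a * c).trace.re ≤ t := by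
  obtain ⟨-, b, hb, hab⟩ := ht
  have h := trace_mul_nonneg_of_nonneg (sub_nonneg.2 hab) (nonneg_iff_posSemidef.2 hc.1)
  rw [trace_smul_sub_mul_of_mem_dualSection hc hb] at h
  simpa using (Complex.nonneg_iff.1 h).1

lemma exists_certificate_of_sInf_scalesAbove_eq (hB : IsCompact B)
    (hne : (scalesAbove B a).Nonempty) (ha : 0 ≤ a) (hc : c ∈ dualSection B)
    (h : sInf (scalesAbove B a) = (a * c).trace.re) :
    ∃ q ∈ Submodule.span ℝ B, 0 ≤ q ∧ a ≤ q ∧ (q - a) * c = 0 := by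
  have hc' := nonneg_iff_posSemidef.2 hc.1
  obtain ⟨-, b, hb, hab⟩ := sInf_scalesAbove_mem hB hne
  refine ⟨_, Submodule.smul_mem _ _ (Submodule.subset_span hb), ha.trans hab, hab,
    mul_eq_zero_of_trace_mul_eq_zero (sub_nonneg.2 hab) hc' ?_⟩
  obtain ⟨s, -, hs⟩ : ∃ s : ℝ, 0 ≤ s ∧ (s : ℂ) = (a * c).trace :=
    RCLike.nonneg_iff_exists_ofReal.1 (trace_mul_nonneg_of_nonneg ha hc')
  rw [trace_smul_sub_mul_of_mem_dualSection hc hb, h, ← hs, Complex.ofReal_re, sub_self]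

lemma IsSection.sInf_scalesAbove_eq_of_certificate (hB : IsSection B) (hne : B.Nonempty)
    (hc : c ∈ dualSection B) {q : Matrix (Fin n) (Fin n) ℂ} (hq : q ∈ Submodule.span ℝ B)
    (hq0 : 0 ≤ q) (haq : a ≤ q) (hqc : (q - a) * c = 0) :
    sInf (scalesAbove B a) = (a * c).trace.re ∧ ∃ b ∈ B, q = sInf (scalesAbove B a) • b ∧
      ENNReal.ofReal (sInf (scalesAbove B a)) = expDmax a b := by
  obtain ⟨s, hs, b, hb, rfl⟩ := hB.exists_eq_smul_of_mem_span hne hq hq0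
  have hsS : s ∈ scalesAbove B a := ⟨hs, b, hb, haq⟩
  have hbdd : BddBelow (scalesAbove B a) := ⟨0, fun _ ht => ht.1⟩
  have htr : (a * c).trace.re = s := by
    have h := congrArg trace hqc
    rw [trace_smul_sub_mul_of_mem_dualSection hc hb, trace_zero, sub_eq_zero] at h
    rw [← h, Complex.ofReal_re]
  have hN : sInf (scalesAbove B a) = s := le_antisymm (csInf_le hbdd hsS)
    (htr ▸ le_csInf ⟨s, hsS⟩ fun _ ht => re_trace_mul_le_of_mem_scalesAbove hc ht)
  refine ⟨hN.trans htr.symm, b, hb, by rw [hN], ?_⟩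
  rw [hN, expDmax_eq_ofReal (hB.nonneg hb) hs haq fun r hr hab =>
    hN ▸ csInf_le hbdd ⟨hr.le, b, hb, hab⟩]

end

/-- Characterization of the maximizer: `‖a‖_B = Tr(a b̃₀)` iff there is `q ∈ Q` with `a ≤ q`
and `(q - a) b̃₀ = 0`; in that case `q = ‖a‖_B • b₀` with `b₀ ∈ B` and
`‖a‖_B = 2^{D_max(a‖b₀)}`. -/
theorem stmt14 (B : Set (Matrix (Fin n) (Fin n) ℂ)) (hB : IsFaithfulSection B)
    (a : Matrix (Fin n) (Fin n) ℂ) (ha : a.PosSemidef)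
    (c₀ : Matrix (Fin n) (Fin n) ℂ) (hc₀ : c₀ ∈ dualSection B) :
    (secNorm B a = ((a * c₀).trace).re ↔
      ∃ q : Matrix (Fin n) (Fin n) ℂ, q ∈ Submodule.span ℝ B ∧ q.PosSemidef ∧
        (q - a).PosSemidef ∧ (q - a) * c₀ = 0) ∧
    (∀ q : Matrix (Fin n) (Fin n) ℂ, q ∈ Submodule.span ℝ B → q.PosSemidef →
      (q - a).PosSemidef → (q - a) * c₀ = 0 →
      ∃ b₀ ∈ B, q = secNorm B a • b₀ ∧
        ENNReal.ofReal (secNorm B a) = expDmax a b₀) := by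
  obtain ⟨hB, b, hb, hb'⟩ := hB
  have ha' : 0 ≤ a := nonneg_iff_posSemidef.2 ha
  have hne := scalesAbove_nonempty hb hb' (IsSelfAdjoint.of_nonneg ha')
  have hcert := fun q (hq : q ∈ Submodule.span ℝ B) (hq0 : q.PosSemidef) =>
    hB.sInf_scalesAbove_eq_of_certificate (a := a) ⟨b, hb⟩ hc₀ hq (nonneg_iff_posSemidef.2 hq0)
  rw [secNorm_eq_sInf_scalesAbove (fun _ => hB.nonneg) ha']
  refine ⟨⟨fun h => ?_, fun ⟨q, hq, hq0, haq, hqc⟩ => (hcert q hq hq0 haq hqc).1⟩,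
    fun q hq hq0 haq hqc => (hcert q hq hq0 haq hqc).2⟩
  obtain ⟨q, hq, hq0, haq, hqc⟩ :=
    exists_certificate_of_sInf_scalesAbove_eq hB.isCompact hne ha' hc₀ h
  exact ⟨q, hq, nonneg_iff_posSemidef.1 hq0, haq, hqc⟩
end

section
/- Let E = {σ_θ}_{θ∈Θ} be a finite family of quantum states on a finite-dimensional Hilbert space H, λ a prior probability on Θ, and (D, w) a classical decision problem. A POVM {M_d}_{d∈D} maximizes the average payoff Σ_{θ,d} λ_θ w(θ,d) Tr(σ_θ M_d) if and only if the operator q := Σ_d Σ_θ λ_θ w(θ,d) σ_θ M_d is Hermitian and satisfies Σ_θ λ_θ w(θ,d) σ_θ ≤ q for all d ∈ D. -/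
/-!
Write `R_d = Σ_θ λ_θ w(θ,d) σ_θ` and `q = Σ_d R_d M_d`. If every `q - R_d` is positive
semidefinite, then `Tr((q - R_d) N_d) ≥ 0` for any POVM `N`, and summing over `d` bounds
the payoff of `N` by `Re Tr q`, the payoff of `M`.

Conversely, for a contraction `A` (`1 - AᴴA ≥ 0`) and an outcome `d₀`, the family
`Aᴴ M_d A + δ_{d d₀} (1 - AᴴA)` is again a POVM. For `A = 1 + β vvᴴ`, optimality of `M`
gives `2 Re (β c) + K |β|² ≤ 0` with `c = vᴴ (q - R_{d₀}) v`, for all `β` with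
`2 Re β + ‖v‖² |β|² ≤ 0`. Letting `β → 0` along the directions `-1 + i s`, `s ∈ ℝ`, forces
`Re c + s Im c ≥ 0` for every `s`, i.e. `c ≥ 0`. Hence `q - R_{d₀} ≥ 0`, and `q` is
Hermitian.
-/

open Matrix ComplexOrder Filter Topology

theorem nonpos_of_forall_mul_add_mul_sq_nonpos {a b δ : ℝ} (hδ : 0 < δ)
    (h : ∀ ε ∈ Set.Ioc 0 δ, a * ε + b * ε ^ 2 ≤ 0) : a ≤ 0 := by
  have hlim : Tendsto (fun ε : ℝ => -b * ε) (𝓝[>] 0) (𝓝 0) := by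
    simpa using (tendsto_id.const_mul (-b)).mono_left (nhdsWithin_le_nhds (a := (0 : ℝ)))
  refine ge_of_tendsto hlim ?_
  filter_upwards [Ioo_mem_nhdsGT hδ] with ε hε
  have := h ε (Set.Ioo_subset_Ioc_self hε)
  nlinarith [hε.1]

theorem eq_zero_of_forall_add_mul_nonneg {x y : ℝ} (h : ∀ s : ℝ, 0 ≤ x + s * y) :
    y = 0 := by
  by_contra hy
  have := h (-(|x| + 1) / y)
  rw [div_mul_cancel₀ _ hy] at this
  linarith [le_abs_self x]

theorem Complex.nonneg_of_forall_re_mul_add_normSq_nonpos {c : ℂ} {m K : ℝ} (hm : 0 ≤ m)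
    (h : ∀ β : ℂ, 2 * β.re + m * normSq β ≤ 0 → 2 * (β * c).re + K * normSq β ≤ 0) :
    0 ≤ c := by
  have key : ∀ s : ℝ, 0 ≤ c.re + s * c.im := by
    intro s
    -- test with `β = ε (-1 + s i)` for small `ε > 0`
    have hδ : 0 < 2 / (m * (1 + s ^ 2) + 1) := by positivity
    suffices -2 * (c.re + s * c.im) ≤ 0 by linarith
    refine nonpos_of_forall_mul_add_mul_sq_nonpos (b := K * (1 + s ^ 2)) hδ fun ε hε => ?_
    have hε' : ε * (m * (1 + s ^ 2) + 1) ≤ 2 := (le_div_iff₀ (by positivity)).mp hε.2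
    have := h ⟨-ε, ε * s⟩ (by simp only [normSq_mk]; nlinarith [hε.1])
    simp only [mul_re, normSq_mk] at this
    linarith
  exact le_def.mpr ⟨by simpa using key 0, (eq_zero_of_forall_add_mul_nonneg key).symm⟩

namespace Matrix

variable {ι : Type*} [Fintype ι]

theorem trace_mul_vecMulVec {R : Type*} [CommSemiring R] (A : Matrix ι ι R) (v w : ι → R) :
    (A * vecMulVec v w).trace = w ⬝ᵥ (A *ᵥ v) := by
  rw [mul_vecMulVec, trace_vecMulVec, dotProduct_comm]

theorem PosSemidef.trace_mul_nonneg_s19 {𝕜 : Type*} [RCLike 𝕜] {A B : Matrix ι ι 𝕜}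
    (hA : A.PosSemidef) (hB : B.PosSemidef) : 0 ≤ (A * B).trace := by
  obtain ⟨m, v, rfl⟩ := posSemidef_iff_eq_sum_vecMulVec.mp hB
  rw [Finset.mul_sum, trace_sum]
  exact Finset.sum_nonneg fun i _ => (trace_mul_vecMulVec A (v i) _).symm ▸
    hA.dotProduct_mulVec_nonneg (v i)

theorem IsHermitian.re_trace_mul_conjTranspose_mul {𝕜 : Type*} [RCLike 𝕜]
    {R M : Matrix ι ι 𝕜} (hR : R.IsHermitian) (hM : M.IsHermitian) (E : Matrix ι ι 𝕜) :
    RCLike.re (R * (Eᴴ * M)).trace = RCLike.re (R * (M * E)).trace := by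
  have : (R * (Eᴴ * M))ᴴ = M * E * R := by
    rw [conjTranspose_mul, conjTranspose_mul, hR.eq, hM.eq, conjTranspose_conjTranspose,
      mul_assoc]
  rw [← RCLike.conj_re, ← RCLike.star_def, ← trace_conjTranspose, this, trace_mul_cycle,
    mul_assoc]

variable [DecidableEq ι]

theorem posSemidef_of_forall_dotProduct_mulVec_nonneg {A : Matrix ι ι ℂ}
    (h : ∀ x, 0 ≤ star x ⬝ᵥ (A *ᵥ x)) : A.PosSemidef := by
  rw [← isPositive_toEuclideanLin_iff, LinearMap.isPositive_iff_complex]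
  intro x
  obtain ⟨r, hr0, hr⟩ := RCLike.nonneg_iff_exists_ofReal.mp (h x.ofLp)
  have hx : inner ℂ (A.toEuclideanLin x) x = star (star x.ofLp ⬝ᵥ (A *ᵥ x.ofLp)) := by
    rw [EuclideanSpace.inner_eq_star_dotProduct, ← star_dotProduct_star, star_star,
      dotProduct_comm]
    rfl
  rw [hx, ← hr]
  simpa using hr0

theorem one_sub_conjTranspose_mul_self_one_add_smul_vecMulVec (v : ι → ℂ) (β : ℂ) :
    1 - (1 + β • vecMulVec v (star v))ᴴ * (1 + β • vecMulVec v (star v)) =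
      ((-(2 * β.re + (∑ i, Complex.normSq (v i)) * Complex.normSq β) : ℝ) : ℂ) •
        vecMulVec v (star v) := by
  have hPP : vecMulVec v (star v) * vecMulVec v (star v) =
      ((∑ i, Complex.normSq (v i) : ℝ) : ℂ) • vecMulVec v (star v) := by
    have : star v ⬝ᵥ v = ((∑ i, Complex.normSq (v i) : ℝ) : ℂ) := by
      simp [dotProduct, Complex.normSq_eq_conj_mul_self]
    rw [vecMulVec_mul_vecMulVec, this, vecMulVec_smul]
  have hcoef : β + star β + star β * β * ((∑ i, Complex.normSq (v i) : ℝ) : ℂ) =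
      ((2 * β.re + (∑ i, Complex.normSq (v i)) * Complex.normSq β : ℝ) : ℂ) := by
    rw [Complex.star_def, ← Complex.normSq_eq_conj_mul_self, Complex.add_conj]
    push_cast
    ring
  rw [conjTranspose_add, conjTranspose_one, conjTranspose_smul,
    (posSemidef_vecMulVec_self_star v).isHermitian.eq, add_mul, mul_add, mul_add, one_mul,
    mul_one, one_mul, smul_mul_smul_comm, hPP, smul_smul, Complex.ofReal_neg, ← hcoef]
  module

end Matrix

section POVM

variable {ι D : Type*} [Fintype ι] [DecidableEq ι] [Fintype D]

def IsPOVM (N : D → Matrix ι ι ℂ) : Prop :=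
  (∀ d, (N d).PosSemidef) ∧ ∑ d, N d = 1

-- `R d` plays the role of `Σ_θ λ_θ w(θ,d) σ_θ`.
def payoff (R N : D → Matrix ι ι ℂ) : ℝ :=
  ∑ d, (R d * N d).trace.re

theorem payoff_le_of_posSemidef_sub {R M N : D → Matrix ι ι ℂ}
    (h : ∀ d, (∑ d', R d' * M d' - R d).PosSemidef) (hN : IsPOVM N) :
    payoff R N ≤ payoff R M := by
  set q := ∑ d', R d' * M d'
  have hle : ∀ d, (R d * N d).trace.re ≤ (q * N d).trace.re := fun d => by
    have := (Complex.le_def.mp ((h d).trace_mul_nonneg_s19 (hN.1 d))).1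
    rw [sub_mul, trace_sub, Complex.sub_re] at this
    simpa using this
  calc payoff R N ≤ ∑ d, (q * N d).trace.re := Finset.sum_le_sum fun d _ => hle d
    _ = payoff R M := by
      rw [← Complex.re_sum, ← trace_sum, ← Finset.mul_sum, hN.2, mul_one, trace_sum,
        Complex.re_sum, payoff]

theorem IsPOVM.conj_add_single [DecidableEq D] {M : D → Matrix ι ι ℂ} (hM : IsPOVM M)
    {A : Matrix ι ι ℂ} (hA : (1 - Aᴴ * A).PosSemidef) (d₀ : D) :
    IsPOVM fun d => Aᴴ * M d * A + if d = d₀ then 1 - Aᴴ * A else 0 := by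
  refine ⟨fun d => ((hM.1 d).conjTranspose_mul_mul_same A).add ?_, ?_⟩
  · rcases eq_or_ne d d₀ with rfl | hd
    · simpa using hA
    · simpa [hd] using PosSemidef.zero
  · rw [Finset.sum_add_distrib, ← Finset.sum_mul, ← Finset.mul_sum, hM.2, mul_one,
      Finset.sum_ite_eq', if_pos (Finset.mem_univ _), add_sub_cancel]

theorem payoff_conj_add_single [DecidableEq D] {R M : D → Matrix ι ι ℂ}
    (hR : ∀ d, (R d).IsHermitian) (hM : ∀ d, (M d).IsHermitian) (E : Matrix ι ι ℂ)
    (d₀ : D) :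
    payoff R (fun d => (1 + E)ᴴ * M d * (1 + E) +
        if d = d₀ then 1 - (1 + E)ᴴ * (1 + E) else 0) =
      payoff R M + 2 * ((∑ d, R d * M d - R d₀) * E).trace.re +
        (∑ d, (R d * (Eᴴ * M d * E)).trace.re - (R d₀ * (Eᴴ * E)).trace.re) := by
  have hconj : ∀ d, (R d * ((1 + E)ᴴ * M d * (1 + E))).trace.re =
      (R d * M d).trace.re + 2 * (R d * M d * E).trace.re +
        (R d * (Eᴴ * M d * E)).trace.re := by
    intro d
    have := (hR d).re_trace_mul_conjTranspose_mul (hM d) E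
    simp only [conjTranspose_add, conjTranspose_one, add_mul, mul_add, one_mul, mul_one,
      trace_add, RCLike.re_to_complex, Complex.add_re] at this ⊢
    rw [this, mul_assoc (R d) (M d) E]
    ring
  have hsingle : (R d₀ * (1 - (1 + E)ᴴ * (1 + E))).trace.re =
      -2 * (R d₀ * E).trace.re - (R d₀ * (Eᴴ * E)).trace.re := by
    have := (hR d₀).re_trace_mul_conjTranspose_mul isHermitian_one E
    simp only [conjTranspose_add, conjTranspose_one, add_mul, mul_add, one_mul, mul_one,
      mul_sub, trace_add, trace_sub, RCLike.re_to_complex, Complex.add_re,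
      Complex.sub_re] at this ⊢
    rw [this]
    ring
  have hfirst : ∑ d, (R d * M d * E).trace.re = ((∑ d, R d * M d) * E).trace.re := by
    rw [Finset.sum_mul, trace_sum, Complex.re_sum]
  simp only [payoff, Matrix.mul_add (R _), trace_add, Complex.add_re, Finset.sum_add_distrib,
    mul_ite, mul_zero, apply_ite trace, apply_ite Complex.re, trace_zero, Complex.zero_re,
    Finset.sum_ite_eq', Finset.mem_univ, if_true, hconj, hsingle, ← Finset.mul_sum, hfirst,
    sub_mul, trace_sub, Complex.sub_re]
  ring

theorem re_trace_sub_mul_le_of_forall_payoff_le {R M : D → Matrix ι ι ℂ}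
    (hR : ∀ d, (R d).IsHermitian) (hM : IsPOVM M)
    (hopt : ∀ N, IsPOVM N → payoff R N ≤ payoff R M) (d₀ : D) {E : Matrix ι ι ℂ}
    (hE : (1 - (1 + E)ᴴ * (1 + E)).PosSemidef) :
    2 * ((∑ d, R d * M d - R d₀) * E).trace.re +
      (∑ d, (R d * (Eᴴ * M d * E)).trace.re - (R d₀ * (Eᴴ * E)).trace.re) ≤ 0 := by
  classical
  have := hopt _ (hM.conj_add_single hE d₀)
  rw [payoff_conj_add_single hR (fun d => (hM.1 d).isHermitian)] at this
  linarith

theorem posSemidef_sub_of_forall_payoff_le {R M : D → Matrix ι ι ℂ}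
    (hR : ∀ d, (R d).IsHermitian) (hM : IsPOVM M)
    (hopt : ∀ N, IsPOVM N → payoff R N ≤ payoff R M) (d₀ : D) :
    (∑ d, R d * M d - R d₀).PosSemidef := by
  refine posSemidef_of_forall_dotProduct_mulVec_nonneg fun v => ?_
  set P := vecMulVec v (star v)
  have hPH : Pᴴ = P := (posSemidef_vecMulVec_self_star v).isHermitian
  refine Complex.nonneg_of_forall_re_mul_add_normSq_nonpos (m := ∑ i, Complex.normSq (v i))
    (K := ∑ d, (R d * P * M d * P).trace.re - (R d₀ * P * P).trace.re)
    (Finset.sum_nonneg fun i _ => Complex.normSq_nonneg (v i)) fun β hβ => ?_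
  have hE : (1 - (1 + β • P)ᴴ * (1 + β • P)).PosSemidef := by
    rw [one_sub_conjTranspose_mul_self_one_add_smul_vecMulVec]
    exact (posSemidef_vecMulVec_self_star v).smul (by exact_mod_cast neg_nonneg.mpr hβ)
  have := re_trace_sub_mul_le_of_forall_payoff_le hR hM hopt d₀ hE
  have hc : ((∑ d, R d * M d - R d₀) * P).trace =
      star v ⬝ᵥ ((∑ d, R d * M d - R d₀) *ᵥ v) :=
    trace_mul_vecMulVec _ _ _
  simp only [conjTranspose_smul, hPH, smul_mul_assoc, mul_smul_comm, smul_smul, trace_smul,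
    smul_eq_mul, hc, ← mul_assoc, Complex.star_def, Complex.mul_conj, Complex.re_ofReal_mul,
    ← Finset.mul_sum] at this
  linear_combination this

theorem forall_payoff_le_iff {R M : D → Matrix ι ι ℂ} (hR : ∀ d, (R d).IsHermitian)
    (hM : IsPOVM M) :
    (∀ N, IsPOVM N → payoff R N ≤ payoff R M) ↔
      (∑ d, R d * M d).IsHermitian ∧ ∀ d, (∑ d', R d' * M d' - R d).PosSemidef := by
  refine ⟨fun hopt => ⟨?_, posSemidef_sub_of_forall_payoff_le hR hM hopt⟩,
    fun h _ hN => payoff_le_of_posSemidef_sub h.2 hN⟩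
  rcases isEmpty_or_nonempty D with _ | ⟨⟨d₀⟩⟩
  · simp
  · simpa using (posSemidef_sub_of_forall_payoff_le hR hM hopt d₀).isHermitian.add (hR d₀)

end POVM

variable {n : ℕ}

theorem stmt19_general {Θ D : Type*} [Fintype Θ] [Fintype D]
    (σ : Θ → Matrix (Fin n) (Fin n) ℂ)
    (hσ : ∀ θ, (σ θ).PosSemidef ∧ (σ θ).trace = 1)
    (lam : Θ → ℝ)
    (w : Θ → D → ℝ)
    (M : D → Matrix (Fin n) (Fin n) ℂ)
    (hMpos : ∀ d, (M d).PosSemidef) (hMsum : ∑ d, M d = 1) :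
    (∀ N : D → Matrix (Fin n) (Fin n) ℂ,
        (∀ d, (N d).PosSemidef) → ∑ d, N d = 1 →
        ∑ θ, ∑ d, lam θ * w θ d * ((σ θ * N d).trace).re ≤
          ∑ θ, ∑ d, lam θ * w θ d * ((σ θ * M d).trace).re) ↔
      ((∑ d, ∑ θ, (lam θ * w θ d) • (σ θ * M d)).IsHermitian ∧
        ∀ d, ((∑ d', ∑ θ, (lam θ * w θ d') • (σ θ * M d')) -
          ∑ θ, (lam θ * w θ d) • σ θ).PosSemidef) := by
  set R := fun d => ∑ θ, (lam θ * w θ d) • σ θ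
  have hR : ∀ d, (R d).IsHermitian := fun d =>
    isSelfAdjoint_sum _ fun θ _ => (hσ θ).1.isHermitian.smul (IsSelfAdjoint.all _)
  have hq : ∀ N : D → Matrix (Fin n) (Fin n) ℂ,
      ∑ d, ∑ θ, (lam θ * w θ d) • (σ θ * N d) = ∑ d, R d * N d := fun N => by
    simp only [R, Finset.sum_mul, smul_mul_assoc]
  have hpayoff : ∀ N : D → Matrix (Fin n) (Fin n) ℂ,
      ∑ θ, ∑ d, lam θ * w θ d * ((σ θ * N d).trace).re = payoff R N := fun N => by
    rw [payoff, Finset.sum_comm]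
    refine Finset.sum_congr rfl fun d _ => ?_
    simp only [R, Finset.sum_mul, smul_mul_assoc, trace_sum, trace_smul, Complex.re_sum,
      Complex.smul_re, smul_eq_mul]
  have key := forall_payoff_le_iff hR ⟨hMpos, hMsum⟩
  simp only [IsPOVM, and_imp] at key
  simp only [hq, hpayoff]
  exact key

/-- A POVM `{M_d}` is optimal for the average payoff iff
`q = Σ_d Σ_θ λ_θ w(θ,d) σ_θ M_d` is Hermitian and `Σ_θ λ_θ w(θ,d) σ_θ ≤ q` for all `d`. -/
theorem stmt19 {Θ D : Type*} [Fintype Θ] [Fintype D]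
    (σ : Θ → Matrix (Fin n) (Fin n) ℂ)
    (hσ : ∀ θ, (σ θ).PosSemidef ∧ (σ θ).trace = 1)
    (lam : Θ → ℝ) (hlam0 : ∀ θ, 0 ≤ lam θ) (hlam1 : ∑ θ, lam θ = 1)
    (w : Θ → D → ℝ) (hw0 : ∀ θ d, 0 ≤ w θ d) (hw1 : ∀ θ d, w θ d ≤ 1)
    (M : D → Matrix (Fin n) (Fin n) ℂ)
    (hMpos : ∀ d, (M d).PosSemidef) (hMsum : ∑ d, M d = 1) :
    (∀ N : D → Matrix (Fin n) (Fin n) ℂ,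
        (∀ d, (N d).PosSemidef) → ∑ d, N d = 1 →
        ∑ θ, ∑ d, lam θ * w θ d * ((σ θ * N d).trace).re ≤
          ∑ θ, ∑ d, lam θ * w θ d * ((σ θ * M d).trace).re) ↔
      ((∑ d, ∑ θ, (lam θ * w θ d) • (σ θ * M d)).IsHermitian ∧
        ∀ d, ((∑ d', ∑ θ, (lam θ * w θ d') • (σ θ * M d')) -
          ∑ θ, (lam θ * w θ d) • σ θ).PosSemidef) :=
  stmt19_general σ hσ lam w M hMpos hMsum
end
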